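/- arXiv:2508.12805 — 10 statements merged into one kernel-verified Lean document; each statement's English description precedes it below -/
import Mathlib

section
/- Let L be a normal modal logic, let φ and ψ be ML-formulas, and let σ = sig(φ) ∩ sig(ψ). Then the following are equivalent: (1) there does not exist an L-interpolant for φ and ψ; (2) there exist Kripke models M1, M2 that are models for L and worlds w1 of M1 and w2 of M2 such that M1,w1 ⊨ φ, M2,w2 ⊨ ¬ψ, and M1,w1 ≡_{ML(σ)} M2,w2. -/
/-- Formulas of propositional modal logic ML, built from propositional
variables (indexed by `ℕ`) using `⊤`, `∧`, `¬` and `◇`. -/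
inductive ML : Type
  | top : ML
  | var : ℕ → ML
  | and : ML → ML → ML
  | not : ML → ML
  | dia : ML → ML

/-- `□φ` abbreviates `¬◇¬φ`. -/
def ML.box (φ : ML) : ML := .not (.dia (.not φ))

/-- `φ → ψ` as an abbreviation. -/
def ML.impl (φ ψ : ML) : ML := .not (.and φ (.not ψ))

/-- The signature of a formula: the set of propositional variables occurring in it. -/
def ML.sig : ML → Set ℕ
  | .top => ∅
  | .var p => {p}
  | .and φ ψ => φ.sig ∪ ψ.sig
  | .not φ => φ.sig
  | .dia φ => φ.sig

/-- Uniform substitution of formulas for propositional variables. -/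
def ML.subst (s : ℕ → ML) : ML → ML
  | .top => .top
  | .var p => s p
  | .and φ ψ => .and (φ.subst s) (ψ.subst s)
  | .not φ => .not (φ.subst s)
  | .dia φ => .dia (φ.subst s)

/-- A Kripke model: a nonempty set of worlds, an accessibility relation and a valuation. -/
structure Kripke : Type 1 where
  W : Type
  nonempty : Nonempty W
  R : W → W → Prop
  V : ℕ → Set W

/-- Truth of an ML-formula at a world of a Kripke model. -/
def ML.sat (M : Kripke) : M.W → ML → Prop
  | _, .top => True
  | w, .var p => w ∈ M.V p
  | w, .and φ ψ => ML.sat M w φ ∧ ML.sat M w ψ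
  | w, .not φ => ¬ ML.sat M w φ
  | w, .dia φ => ∃ v, M.R w v ∧ ML.sat M v φ

/-- A formula is valid if it is true at every world of every Kripke model. -/
def ML.valid (φ : ML) : Prop := ∀ (M : Kripke) (w : M.W), ML.sat M w φ

/-- A normal modal logic: a set of ML-formulas containing all valid formulas and
closed under modus ponens, necessitation and uniform substitution. -/
structure NormalLogic : Type 1 where
  F : Set ML
  valid_mem : ∀ φ : ML, φ.valid → φ ∈ F
  mp : ∀ φ ψ : ML, ML.impl φ ψ ∈ F → φ ∈ F → ψ ∈ F
  nec : ∀ φ : ML, φ ∈ F → φ.box ∈ F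
  subst : ∀ (φ : ML) (s : ℕ → ML), φ ∈ F → φ.subst s ∈ F

/-- `M` is a model for the logic `L`: every formula of `L` is true at every world of `M`. -/
def Kripke.IsModelFor (M : Kripke) (L : NormalLogic) : Prop :=
  ∀ φ ∈ L.F, ∀ w : M.W, ML.sat M w φ

/-- Local consequence over the models for `L`. -/
def NormalLogic.entails (L : NormalLogic) (φ ψ : ML) : Prop :=
  ∀ M : Kripke, M.IsModelFor L → ∀ w : M.W, ML.sat M w φ → ML.sat M w ψ

/-- An `L`-interpolant for `φ` and `ψ`. -/
def NormalLogic.Interpolant (L : NormalLogic) (φ ψ χ : ML) : Prop :=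
  χ.sig ⊆ φ.sig ∩ ψ.sig ∧ L.entails φ χ ∧ L.entails χ ψ

/-! The nontrivial direction is the usual compactness argument. Since `φ` has no interpolant, the
`σ`-consequences of `φ` together with `¬ψ` are finitely satisfiable (a finite conjunction of them
would be an interpolant), hence satisfiable at some world `w₂`, by compactness. Dually the
`σ`-theory of `w₂` together with `φ` is finitely satisfiable, as otherwise the negation of a finite
conjunction from it would be a `σ`-consequence of `φ` failing at `w₂`; a world `w₁` satisfying it
agrees with `w₂` on all `σ`-formulas, the `σ`-theory of `w₂` being closed under negation.
Compactness over the models for `L` comes from Łoś's theorem for ultraproducts of Kripke models. -/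

def ML.conj (l : List ML) : ML := l.foldr .and .top

theorem ML.sat_conj (M : Kripke) (w : M.W) (l : List ML) :
    ML.sat M w (ML.conj l) ↔ ∀ χ ∈ l, ML.sat M w χ := by
  induction l with
  | nil => simp [ML.conj, ML.sat]
  | cons χ l ih => simp [ML.conj, ML.sat, ← ih]

theorem ML.sig_conj_subset {σ : Set ℕ} {l : List ML} (h : ∀ χ ∈ l, χ.sig ⊆ σ) :
    (ML.conj l).sig ⊆ σ := by
  induction l with
  | nil => simp [ML.conj, ML.sig]
  | cons χ l ih =>
    simp only [List.mem_cons, forall_eq_or_imp] at h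
    exact Set.union_subset h.1 (ih h.2)

def Kripke.ultraproduct {I : Type} (U : Ultrafilter I) (M : I → Kripke) : Kripke where
  W := ∀ i, (M i).W
  nonempty := ⟨fun i => (M i).nonempty.some⟩
  R f g := {i | (M i).R (f i) (g i)} ∈ U
  V p := {f | {i | f i ∈ (M i).V p} ∈ U}

theorem ML.sat_ultraproduct {I : Type} (U : Ultrafilter I) (M : I → Kripke) (χ : ML)
    (f : (Kripke.ultraproduct U M).W) :
    ML.sat (Kripke.ultraproduct U M) f χ ↔ {i | ML.sat (M i) (f i) χ} ∈ U := by
  induction χ generalizing f with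
  | top => exact iff_of_true trivial (Filter.univ_mem' fun _ => trivial)
  | var p => rfl
  | and χ₁ χ₂ ih₁ ih₂ =>
    simp only [ML.sat, ih₁, ih₂, Set.ofPred_and]
    exact Filter.inter_mem_iff.symm
  | not χ ih => simp only [ML.sat, ih, ← Ultrafilter.compl_mem_iff_notMem]; rfl
  | dia χ ih =>
    constructor
    · rintro ⟨g, hR, hg⟩
      filter_upwards [hR, (ih g).1 hg] with i hRi hgi using ⟨g i, hRi, hgi⟩
    · intro h
      -- the successor is chosen coordinatewise, wherever one exists
      let g : (Kripke.ultraproduct U M).W := fun i =>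
        @Classical.epsilon _ (M i).nonempty fun v => (M i).R (f i) v ∧ ML.sat (M i) v χ
      refine ⟨g, ?_, (ih g).2 ?_⟩
      · filter_upwards [h] with i hi using (Classical.epsilon_spec hi).1
      · filter_upwards [h] with i hi using (Classical.epsilon_spec hi).2

theorem Kripke.IsModelFor.ultraproduct {L : NormalLogic} {I : Type} (U : Ultrafilter I)
    {M : I → Kripke} (hM : ∀ i, (M i).IsModelFor L) :
    (Kripke.ultraproduct U M).IsModelFor L := fun θ hθ f =>
  (ML.sat_ultraproduct U M θ f).2 (Filter.univ_mem' fun i => hM i θ hθ (f i))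

/-- Compactness of local consequence over the models for `L`: otherwise an ultraproduct, over an
ultrafilter refining `atTop`, of countermodels indexed by the finite subsets of `Γ` is one for
`Γ ⊨ θ`. -/
theorem NormalLogic.exists_list_entails (L : NormalLogic) {Γ : Set ML} {θ : ML}
    (h : ∀ M : Kripke, M.IsModelFor L → ∀ w : M.W, (∀ χ ∈ Γ, ML.sat M w χ) → ML.sat M w θ) :
    ∃ l : List ML, (∀ χ ∈ l, χ ∈ Γ) ∧ L.entails (ML.conj l) θ := by
  classical
  by_contra! hl
  simp only [NormalLogic.entails, ML.sat_conj, not_forall, exists_prop] at hl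
  choose M hM w hw hθ using fun T : Finset ML =>
    hl (T.filter (· ∈ Γ)).toList fun _ hχ => (Finset.mem_filter.1 (Finset.mem_toList.1 hχ)).2
  let U : Ultrafilter (Finset ML) := .of Filter.atTop
  have hΓ : ∀ χ ∈ Γ, ML.sat (Kripke.ultraproduct U M) w χ := fun χ hχ =>
    (ML.sat_ultraproduct U M χ w).2 <| Ultrafilter.of_le _ <|
      (Filter.eventually_ge_atTop {χ}).mono fun T hT =>
        hw T χ (Finset.mem_toList.2 (Finset.mem_filter.2 ⟨hT (Finset.mem_singleton_self χ), hχ⟩))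
  obtain ⟨T, hTθ⟩ := Ultrafilter.nonempty_of_mem <|
    (ML.sat_ultraproduct U M θ w).1 (h _ (.ultraproduct U hM) w hΓ)
  exact hθ T hTθ

theorem NormalLogic.exists_model_sat_consequences_not_sat (L : NormalLogic) {φ ψ : ML}
    {σ : Set ℕ} (h : ∀ χ : ML, χ.sig ⊆ σ → L.entails φ χ → ¬ L.entails χ ψ) :
    ∃ (M : Kripke) (w : M.W), M.IsModelFor L ∧ ¬ ML.sat M w ψ ∧
      ∀ χ : ML, χ.sig ⊆ σ → L.entails φ χ → ML.sat M w χ := by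
  by_contra! hψ
  obtain ⟨l, hl, hlψ⟩ := L.exists_list_entails (Γ := {χ | χ.sig ⊆ σ ∧ L.entails φ χ})
    fun M hM w hΓ => by_contra fun hnψ => by
      obtain ⟨χ, hχσ, hφχ, hnχ⟩ := hψ M w hM hnψ
      exact hnχ (hΓ χ ⟨hχσ, hφχ⟩)
  refine h _ (ML.sig_conj_subset fun χ hχ => (hl χ hχ).1) (fun M hM w hφ => ?_) hlψ
  exact (ML.sat_conj M w l).2 fun χ hχ => (hl χ hχ).2 M hM w hφ

theorem NormalLogic.exists_model_sat_theory_of_sat_consequences (L : NormalLogic) {φ : ML}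
    {σ : Set ℕ} {M₂ : Kripke} {w₂ : M₂.W}
    (h : ∀ χ : ML, χ.sig ⊆ σ → L.entails φ χ → ML.sat M₂ w₂ χ) :
    ∃ (M₁ : Kripke) (w₁ : M₁.W), M₁.IsModelFor L ∧ ML.sat M₁ w₁ φ ∧
      ∀ χ : ML, χ.sig ⊆ σ → ML.sat M₂ w₂ χ → ML.sat M₁ w₁ χ := by
  by_contra! hφ
  obtain ⟨l, hl, hlφ⟩ := L.exists_list_entails (θ := .not φ)
    (Γ := {χ | χ.sig ⊆ σ ∧ ML.sat M₂ w₂ χ}) fun M hM w hΔ hsat => by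
      obtain ⟨χ, hχσ, hχ₂, hnχ⟩ := hφ M w hM hsat
      exact hnχ (hΔ χ ⟨hχσ, hχ₂⟩)
  have hφl : L.entails φ (.not (ML.conj l)) := fun M hM w hsat hconj => hlφ M hM w hconj hsat
  exact h (.not _) (ML.sig_conj_subset fun χ hχ => (hl χ hχ).1) hφl
    ((ML.sat_conj M₂ w₂ l).2 fun χ hχ => (hl χ hχ).2)

theorem ML.sat_iff_of_forall_sat_imp {σ : Set ℕ} {M₁ M₂ : Kripke} {w₁ : M₁.W} {w₂ : M₂.W}
    (h : ∀ χ : ML, χ.sig ⊆ σ → ML.sat M₂ w₂ χ → ML.sat M₁ w₁ χ) (χ : ML) (hχ : χ.sig ⊆ σ) :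
    ML.sat M₁ w₁ χ ↔ ML.sat M₂ w₂ χ :=
  ⟨fun h₁ => by_contra fun h₂ => h (.not χ) hχ h₂ h₁, h χ hχ⟩

theorem interpolant_existence_criterion_indistinguishability
    (L : NormalLogic) (φ ψ : ML) (σ : Set ℕ) (hσ : σ = φ.sig ∩ ψ.sig) :
    (¬ ∃ χ : ML, L.Interpolant φ ψ χ) ↔
      ∃ (M₁ M₂ : Kripke) (w₁ : M₁.W) (w₂ : M₂.W),
        M₁.IsModelFor L ∧ M₂.IsModelFor L ∧
        ML.sat M₁ w₁ φ ∧ ¬ ML.sat M₂ w₂ ψ ∧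
        (∀ χ : ML, χ.sig ⊆ σ → (ML.sat M₁ w₁ χ ↔ ML.sat M₂ w₂ χ)) := by
  subst hσ
  constructor
  · intro hno
    obtain ⟨M₂, w₂, hM₂, hψ, hcons⟩ := L.exists_model_sat_consequences_not_sat
      fun χ hχσ hφχ hχψ => hno ⟨χ, hχσ, hφχ, hχψ⟩
    obtain ⟨M₁, w₁, hM₁, hφ, htheory⟩ := L.exists_model_sat_theory_of_sat_consequences hcons
    exact ⟨M₁, M₂, w₁, w₂, hM₁, hM₂, hφ, hψ, ML.sat_iff_of_forall_sat_imp htheory⟩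
  · rintro ⟨M₁, M₂, w₁, w₂, hM₁, hM₂, hφ, hψ, hequiv⟩ ⟨χ, hχσ, hφχ, hχψ⟩
    exact hψ (hχψ M₂ hM₂ w₂ ((hequiv χ hχσ).1 (hφχ M₁ hM₁ w₁ hφ)))
end

section
/- Let L be a normal modal logic, let φ and ψ be ML-formulas, and let σ = sig(φ) ∩ sig(ψ). Then the following are equivalent: (1) there does not exist an L-interpolant for φ and ψ; (2) there exist Kripke models M1, M2 that are models for L and worlds w1 of M1 and w2 of M2 such that M1,w1 ⊨ φ, M2,w2 ⊨ ¬ψ, and M1,w1 ∼_{ML(σ)} M2,w2 (w1 and w2 are σ-bisimilar). -/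
/-- `β` is a `σ`-bisimulation between the Kripke models `M₁` and `M₂`. -/
def IsBisimulation (σ : Set ℕ) (M₁ M₂ : Kripke) (β : M₁.W → M₂.W → Prop) : Prop :=
  ∀ u₁ u₂, β u₁ u₂ →
    (∀ p ∈ σ, (u₁ ∈ M₁.V p ↔ u₂ ∈ M₂.V p)) ∧
    (∀ v₁, M₁.R u₁ v₁ → ∃ v₂, M₂.R u₂ v₂ ∧ β v₁ v₂) ∧
    (∀ v₂, M₂.R u₂ v₂ → ∃ v₁, M₁.R u₁ v₁ ∧ β v₁ v₂)

/-- `M₁,w₁ ∼_{ML(σ)} M₂,w₂`: some `σ`-bisimulation relates `w₁` to `w₂`. -/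
def Bisimilar (σ : Set ℕ) (M₁ M₂ : Kripke) (w₁ : M₁.W) (w₂ : M₂.W) : Prop :=
  ∃ β : M₁.W → M₂.W → Prop, IsBisimulation σ M₁ M₂ β ∧ β w₁ w₂


/-!
An interpolant would be a σ-formula, and σ-formulas are invariant under σ-bisimulations; this is
the easy direction. Conversely, if there is no interpolant, compactness (proved with ultraproducts
over finite sets of formulas) gives a world `w₂` of a model for `L` refuting `ψ` but satisfying every
σ-consequence of `φ`, and then a world `w₁` of a model for `L` satisfying `φ` together with the whole
σ-theory of `w₂`. Such σ-equivalent worlds need not be bisimilar, but their ultrapowers along a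
nonprincipal ultrafilter on `ℕ` are: by Łoś's theorem the ultrapowers are still models for `L` and
preserve `φ`, `¬ψ` and σ-equivalence, the language being countable they are modally saturated, and
between saturated models σ-equivalence is itself a σ-bisimulation (Hennessy–Milner).
-/

open Filter

namespace ML

def code : ML → ℕ
  | .top => Nat.pair 0 0
  | .var p => Nat.pair 1 p
  | .and φ ψ => Nat.pair 2 (Nat.pair φ.code ψ.code)
  | .not φ => Nat.pair 3 φ.code
  | .dia φ => Nat.pair 4 φ.code

theorem code_injective : Function.Injective code := by
  intro φ ψ h
  induction φ generalizing ψ with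
  | and φ₁ φ₂ ih₁ ih₂ =>
    cases ψ <;> simp only [code, Nat.pair_eq_pair] at h <;> try omega
    rw [ih₁ h.2.1, ih₂ h.2.2]
  | not φ ih | dia φ ih =>
    cases ψ <;> simp only [code, Nat.pair_eq_pair] at h <;> try omega
    rw [ih h.2]
  | _ => cases ψ <;> simp_all [code, Nat.pair_eq_pair]

instance : Countable ML := code_injective.countable

def conj_s1 : List ML → ML
  | [] => .top
  | χ :: l => .and χ (conj_s1 l)

theorem sat_conj_s1 {M : Kripke} {w : M.W} {l : List ML} :
    sat M w (conj_s1 l) ↔ ∀ χ ∈ l, sat M w χ := by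
  induction l with
  | nil => simp [conj_s1, sat]
  | cons χ l ih => simp [conj_s1, sat, ih]

theorem sig_conj_subset_s1 {σ : Set ℕ} {l : List ML} (h : ∀ χ ∈ l, χ.sig ⊆ σ) :
    (conj_s1 l).sig ⊆ σ := by
  induction l with
  | nil => simp [conj_s1, sig]
  | cons χ l ih => simp_all [conj_s1, sig]

end ML

namespace Kripke

instance (M : Kripke) : Nonempty M.W := M.nonempty

section Ultraproduct

variable {ι : Type} (𝒰 : Ultrafilter ι) (M : ι → Kripke)

def ultraproduct_s1 : Kripke where
  W := ∀ i, (M i).W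
  nonempty := inferInstance
  R w v := ∀ᶠ i in 𝒰, (M i).R (w i) (v i)
  V p := {w | ∀ᶠ i in 𝒰, w i ∈ (M i).V p}

theorem sat_ultraproduct {χ : ML} {w : (ultraproduct_s1 𝒰 M).W} :
    ML.sat (ultraproduct_s1 𝒰 M) w χ ↔ ∀ᶠ i in 𝒰, ML.sat (M i) (w i) χ := by
  induction χ generalizing w with
  | top => simp [ML.sat]
  | var p => rfl
  | and φ ψ ihφ ihψ => simp only [ML.sat, ihφ, ihψ, eventually_and]
  | not φ ih => simp only [ML.sat, ih, Ultrafilter.eventually_not]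
  | dia φ ih =>
    constructor
    · rintro ⟨v, hR, hv⟩
      filter_upwards [hR, ih.1 hv] with i hRi hvi using ⟨v i, hRi, hvi⟩
    · intro h
      let v : (ultraproduct_s1 𝒰 M).W := fun i =>
        Classical.epsilon fun u => (M i).R (w i) u ∧ ML.sat (M i) u φ
      have hv : ∀ᶠ i in 𝒰, (M i).R (w i) (v i) ∧ ML.sat (M i) (v i) φ := by
        filter_upwards [h] with i hi using Classical.epsilon_spec hi
      exact ⟨v, hv.mono fun _ => And.left, ih.2 (hv.mono fun _ => And.right)⟩

theorem sat_ultrapower {N : Kripke} {w : N.W} {χ : ML} :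
    ML.sat (ultraproduct_s1 𝒰 fun _ => N) (fun _ => w) χ ↔ ML.sat N w χ :=
  (sat_ultraproduct _ _).trans eventually_const

variable {M} in
theorem isModelFor_ultraproduct {L : NormalLogic} (h : ∀ i, (M i).IsModelFor L) :
    (ultraproduct_s1 𝒰 M).IsModelFor L :=
  fun χ hχ w => (sat_ultraproduct 𝒰 M).2 (.of_forall fun i => h i χ hχ (w i))

end Ultraproduct

end Kripke

open Kripke

theorem NormalLogic.exists_finset_conj_entails {L : NormalLogic} {Γ : Set ML} {θ : ML}
    (h : ∀ M : Kripke, M.IsModelFor L → ∀ w, (∀ χ ∈ Γ, ML.sat M w χ) → ML.sat M w θ) :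
    ∃ s : Finset ML, ↑s ⊆ Γ ∧ L.entails (ML.conj_s1 s.toList) θ := by
  classical
  by_contra! hs
  have hcounter : ∀ s : Finset ML, ∃ (M : Kripke) (w : M.W), M.IsModelFor L ∧
      (∀ χ ∈ s, χ ∈ Γ → ML.sat M w χ) ∧ ¬ ML.sat M w θ := by
    intro s
    have hfail := hs (s.filter (· ∈ Γ)) (by simp [Set.subset_def])
    simp only [NormalLogic.entails, not_forall] at hfail
    obtain ⟨M, hM, w, hw, hθ⟩ := hfail
    exact ⟨M, w, hM, fun χ hχ hχΓ => ML.sat_conj_s1.1 hw χ (by simp [hχ, hχΓ]), hθ⟩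
  choose M w hM hΓ hθ using hcounter
  -- an ultrafilter in which every finite set of formulas is eventually contained
  let 𝒰 := Ultrafilter.of (atTop : Filter (Finset ML))
  have hθ𝒰 := h _ (isModelFor_ultraproduct 𝒰 hM) w fun χ hχ =>
    (sat_ultraproduct 𝒰 M).2 <| Eventually.mono (Ultrafilter.of_le _ (eventually_ge_atTop {χ}))
      fun s hs => hΓ s χ (hs (Finset.mem_singleton_self χ)) hχ
  obtain ⟨s, hs⟩ := ((sat_ultraproduct 𝒰 M).1 hθ𝒰).exists
  exact hθ s hs

def Kripke.IsSaturated (M : Kripke) : Prop :=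
  ∀ (w : M.W) (Δ : Set ML),
    (∀ s : Finset ML, ↑s ⊆ Δ → ∃ v, M.R w v ∧ ∀ χ ∈ s, ML.sat M v χ) →
      ∃ v, M.R w v ∧ ∀ χ ∈ Δ, ML.sat M v χ

theorem Kripke.isSaturated_ultraproduct_hyperfilter (M : ℕ → Kripke) :
    (ultraproduct_s1 (hyperfilter ℕ) M).IsSaturated := by
  classical
  intro w Δ hΔ
  rcases Δ.eq_empty_or_nonempty with rfl | hne
  · obtain ⟨v, hR, -⟩ := hΔ ∅ (by simp)
    exact ⟨v, hR, by simp⟩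
  obtain ⟨f, rfl⟩ := (Set.to_countable Δ).exists_eq_range hne
  let D : ℕ → Finset ML := fun n => (Finset.range (n + 1)).image f
  let P : ℕ → ℕ → Prop := fun n i =>
    ∃ u, (M i).R (w i) u ∧ ML.sat (M i) u (ML.conj_s1 (D n).toList)
  have hP : ∀ n, ∀ᶠ i in hyperfilter ℕ, P n i := by
    intro n
    obtain ⟨v, hR, hv⟩ := hΔ (D n) (by simp [D, Set.image_subset_iff])
    exact (sat_ultraproduct _ M (χ := .dia _)).1 ⟨v, hR, ML.sat_conj_s1.2 (by simpa using hv)⟩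
  -- the `i`-th coordinate realises the longest initial segment `D n` with `n ≤ i` that it can
  let N : ℕ → ℕ := fun i => Nat.findGreatest (P · i) i
  let v : (ultraproduct_s1 (hyperfilter ℕ) M).W := fun i =>
    Classical.epsilon fun u => (M i).R (w i) u ∧ ML.sat (M i) u (ML.conj_s1 (D (N i)).toList)
  have hv : ∀ k, ∀ᶠ i in hyperfilter ℕ, (M i).R (w i) (v i) ∧ ML.sat (M i) (v i) (f k) := by
    intro k
    filter_upwards [Nat.hyperfilter_le_atTop (eventually_ge_atTop k), hP k] with i hki hPki
    have hPNi : P (N i) i := Nat.findGreatest_spec (P := (P · i)) hki hPki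
    have hkNi : k ≤ N i := Nat.le_findGreatest (P := (P · i)) hki hPki
    obtain ⟨hR, hsat⟩ := Classical.epsilon_spec hPNi
    exact ⟨hR, ML.sat_conj_s1.1 hsat _ (by simpa [D] using ⟨k, hkNi, rfl⟩)⟩
  refine ⟨v, (hv 0).mono fun _ => And.left, ?_⟩
  rintro _ ⟨k, rfl⟩
  exact (sat_ultraproduct _ M).2 ((hv k).mono fun _ => And.right)

theorem ML.sat_iff_of_isBisimulation {σ : Set ℕ} {M₁ M₂ : Kripke} {β : M₁.W → M₂.W → Prop}
    (hβ : IsBisimulation σ M₁ M₂ β) {χ : ML} (hχ : χ.sig ⊆ σ) {u₁ : M₁.W} {u₂ : M₂.W}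
    (hu : β u₁ u₂) : ML.sat M₁ u₁ χ ↔ ML.sat M₂ u₂ χ := by
  induction χ generalizing u₁ u₂ with
  | top => rfl
  | var p => exact (hβ u₁ u₂ hu).1 p (hχ rfl)
  | and φ ψ ihφ ihψ =>
    exact and_congr (ihφ (subset_trans Set.subset_union_left hχ) hu)
      (ihψ (subset_trans Set.subset_union_right hχ) hu)
  | not φ ih => exact not_congr (ih hχ hu)
  | dia φ ih =>
    constructor
    · rintro ⟨v₁, hR, hv⟩
      obtain ⟨v₂, hR₂, hβv⟩ := (hβ u₁ u₂ hu).2.1 v₁ hR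
      exact ⟨v₂, hR₂, (ih hχ hβv).1 hv⟩
    · rintro ⟨v₂, hR, hv⟩
      obtain ⟨v₁, hR₁, hβv⟩ := (hβ u₁ u₂ hu).2.2 v₂ hR
      exact ⟨v₁, hR₁, (ih hχ hβv).2 hv⟩

def ModalEquiv (σ : Set ℕ) (M₁ M₂ : Kripke) (w₁ : M₁.W) (w₂ : M₂.W) : Prop :=
  ∀ χ : ML, χ.sig ⊆ σ → (ML.sat M₁ w₁ χ ↔ ML.sat M₂ w₂ χ)

namespace ModalEquiv

variable {σ : Set ℕ} {M₁ M₂ : Kripke} {w₁ : M₁.W} {w₂ : M₂.W}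

theorem symm (h : ModalEquiv σ M₁ M₂ w₁ w₂) : ModalEquiv σ M₂ M₁ w₂ w₁ :=
  fun χ hχ => (h χ hχ).symm

-- the σ-theory is closed under negation, so one inclusion of theories suffices
theorem of_forall_sat (h : ∀ χ : ML, χ.sig ⊆ σ → ML.sat M₂ w₂ χ → ML.sat M₁ w₁ χ) :
    ModalEquiv σ M₁ M₂ w₁ w₂ :=
  fun χ hχ => ⟨fun h₁ => by_contra fun h₂ => h (.not χ) hχ h₂ h₁, h χ hχ⟩

theorem ultrapower {ι κ : Type} (𝒰 : Ultrafilter ι) (𝒱 : Ultrafilter κ)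
    (h : ModalEquiv σ M₁ M₂ w₁ w₂) :
    ModalEquiv σ (ultraproduct_s1 𝒰 fun _ => M₁) (ultraproduct_s1 𝒱 fun _ => M₂)
      (fun _ => w₁) (fun _ => w₂) :=
  fun χ hχ => (sat_ultrapower 𝒰).trans ((h χ hχ).trans (sat_ultrapower 𝒱).symm)

theorem exists_succ_of_isSaturated (h : ModalEquiv σ M₁ M₂ w₁ w₂) (h₂ : M₂.IsSaturated)
    {v₁ : M₁.W} (hR : M₁.R w₁ v₁) : ∃ v₂, M₂.R w₂ v₂ ∧ ModalEquiv σ M₁ M₂ v₁ v₂ := by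
  obtain ⟨v₂, hR₂, hv₂⟩ := h₂ w₂ {χ | χ.sig ⊆ σ ∧ ML.sat M₁ v₁ χ} fun s hs => by
    have hs_sig : (ML.dia (ML.conj_s1 s.toList)).sig ⊆ σ :=
      ML.sig_conj_subset_s1 fun χ hχ => (hs (Finset.mem_toList.1 hχ)).1
    obtain ⟨u, hRu, hu⟩ := (h _ hs_sig).1
      ⟨v₁, hR, ML.sat_conj_s1.2 fun χ hχ => (hs (Finset.mem_toList.1 hχ)).2⟩
    exact ⟨u, hRu, fun χ hχ => ML.sat_conj_s1.1 hu χ (Finset.mem_toList.2 hχ)⟩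
  exact ⟨v₂, hR₂, (of_forall_sat fun χ hχ hsat => hv₂ χ ⟨hχ, hsat⟩).symm⟩

end ModalEquiv

theorem isBisimulation_modalEquiv {σ : Set ℕ} {M₁ M₂ : Kripke} (h₁ : M₁.IsSaturated)
    (h₂ : M₂.IsSaturated) : IsBisimulation σ M₁ M₂ (ModalEquiv σ M₁ M₂) :=
  fun _ _ hu =>
    ⟨fun p hp => hu (.var p) (Set.singleton_subset_iff.2 hp),
      fun _ hR => hu.exists_succ_of_isSaturated h₂ hR,
      fun _ hR => (hu.symm.exists_succ_of_isSaturated h₁ hR).imp fun _ h => ⟨h.1, h.2.symm⟩⟩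

theorem NormalLogic.exists_sat_consequences_of_not_exists_interpolant {L : NormalLogic}
    {φ ψ : ML} (h : ¬ ∃ χ : ML, L.Interpolant φ ψ χ) :
    ∃ (M : Kripke) (w : M.W), M.IsModelFor L ∧ ¬ ML.sat M w ψ ∧
      ∀ χ : ML, χ.sig ⊆ φ.sig ∩ ψ.sig → L.entails φ χ → ML.sat M w χ := by
  set Φ := {χ : ML | χ.sig ⊆ φ.sig ∩ ψ.sig ∧ L.entails φ χ}
  suffices ¬ ∀ M : Kripke, M.IsModelFor L → ∀ w, (∀ χ ∈ Φ, ML.sat M w χ) → ML.sat M w ψ by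
    push Not at this
    obtain ⟨M, hM, w, hΦ, hψ⟩ := this
    exact ⟨M, w, hM, hψ, fun χ hsig hφχ => hΦ χ ⟨hsig, hφχ⟩⟩
  intro hΦ
  obtain ⟨s, hsΦ, hs⟩ := L.exists_finset_conj_entails hΦ
  refine h ⟨ML.conj_s1 s.toList, ML.sig_conj_subset_s1 fun χ hχ => (hsΦ (Finset.mem_toList.1 hχ)).1,
    fun M hM w hφ => ML.sat_conj_s1.2 fun χ hχ => (hsΦ (Finset.mem_toList.1 hχ)).2 M hM w hφ, hs⟩

theorem NormalLogic.exists_sat_modalEquiv {L : NormalLogic} {φ : ML} {σ : Set ℕ} {M₂ : Kripke}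
    {w₂ : M₂.W} (hw₂ : ∀ χ : ML, χ.sig ⊆ σ → L.entails φ χ → ML.sat M₂ w₂ χ) :
    ∃ (M₁ : Kripke) (w₁ : M₁.W), M₁.IsModelFor L ∧ ML.sat M₁ w₁ φ ∧ ModalEquiv σ M₁ M₂ w₁ w₂ := by
  set T := {χ : ML | χ.sig ⊆ σ ∧ ML.sat M₂ w₂ χ}
  suffices ¬ ∀ M : Kripke, M.IsModelFor L → ∀ w, (∀ χ ∈ T, ML.sat M w χ) → ML.sat M w (.not φ) by
    push Not at this
    obtain ⟨M₁, hM₁, w₁, hT, hφ⟩ := this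
    exact ⟨M₁, w₁, hM₁, not_not.1 hφ, ModalEquiv.of_forall_sat fun χ hsig h => hT χ ⟨hsig, h⟩⟩
  intro hT
  obtain ⟨s, hsT, hs⟩ := L.exists_finset_conj_entails hT
  exact hw₂ (.not (ML.conj_s1 s.toList))
    (ML.sig_conj_subset_s1 fun χ hχ => (hsT (Finset.mem_toList.1 hχ)).1)
    (fun M hM w hφ hconj => hs M hM w hconj hφ)
    (ML.sat_conj_s1.2 fun χ hχ => (hsT (Finset.mem_toList.1 hχ)).2)

theorem interpolant_existence_criterion_bisimulation
    (L : NormalLogic) (φ ψ : ML) (σ : Set ℕ) (hσ : σ = φ.sig ∩ ψ.sig) :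
    (¬ ∃ χ : ML, L.Interpolant φ ψ χ) ↔
      ∃ (M₁ M₂ : Kripke) (w₁ : M₁.W) (w₂ : M₂.W),
        M₁.IsModelFor L ∧ M₂.IsModelFor L ∧
        ML.sat M₁ w₁ φ ∧ ¬ ML.sat M₂ w₂ ψ ∧
        Bisimilar σ M₁ M₂ w₁ w₂ := by
  subst hσ
  constructor
  · intro hno
    obtain ⟨M₂, w₂, hM₂, hψ, hw₂⟩ := L.exists_sat_consequences_of_not_exists_interpolant hno
    obtain ⟨M₁, w₁, hM₁, hφ, hequiv⟩ := L.exists_sat_modalEquiv hw₂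
    let 𝒰 := hyperfilter ℕ
    exact ⟨_, _, fun _ => w₁, fun _ => w₂, isModelFor_ultraproduct 𝒰 fun _ => hM₁,
      isModelFor_ultraproduct 𝒰 fun _ => hM₂, (sat_ultrapower 𝒰).2 hφ,
      mt (sat_ultrapower 𝒰).1 hψ, _, isBisimulation_modalEquiv
        (isSaturated_ultraproduct_hyperfilter _) (isSaturated_ultraproduct_hyperfilter _),
      hequiv.ultrapower 𝒰 𝒰⟩
  · rintro ⟨M₁, M₂, w₁, w₂, hM₁, hM₂, hφ, hψ, β, hβ, hw⟩ ⟨χ, hsig, hφχ, hχψ⟩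
    exact hψ (hχψ M₂ hM₂ w₂ ((ML.sat_iff_of_isBisimulation hβ hsig hw).1 (hφχ M₁ hM₁ w₁ hφ)))
end

section
/- Let φ = ◇◇p ∧ ¬◇p and ψ = ◇◇¬q ∨ q. Then (1) for every weakly transitive Kripke model M and every world w, M,w ⊨ φ implies M,w ⊨ ψ; but (2) there is no ML-formula χ containing no propositional variables (i.e., with sig(χ) = ∅) such that, over weakly transitive Kripke models, φ entails χ and χ entails ψ at every world. Consequently, the modal logic wK4 does not have the Craig interpolation property. -/
/-- `φ ∨ ψ` abbreviates `¬(¬φ ∧ ¬ψ)`. -/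
def ML.or (φ ψ : ML) : ML := .not (.and (.not φ) (.not ψ))

/-- A Kripke model is weakly transitive if `xRy` and `yRz` imply `x = z` or `xRz`. -/
def Kripke.WeaklyTransitive (M : Kripke) : Prop :=
  ∀ x y z : M.W, M.R x y → M.R y z → x = z ∨ M.R x z

/-- Entailment at every world of every weakly transitive Kripke model (wK4-entailment). -/
def WK4Entails (φ ψ : ML) : Prop :=
  ∀ M : Kripke, M.WeaklyTransitive → ∀ w : M.W, ML.sat M w φ → ML.sat M w ψ

/-!
If `w ⊨ ◇◇p ∧ ¬◇p` in a weakly transitive model, the `p`-world two steps away cannot be a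
successor of `w`, so it is `w` itself; hence `w` lies on a 2-cycle and `w ⊨ ◇◇¬q ∨ q`.
A variable-free interpolant `χ` is impossible: in serial models all variable-free formulas
have the same truth value at every world, and the serial, weakly transitive models
`true ⇄ false` (all variables true exactly at `true`) and `(ℕ, <)` (all variables false
exactly at `0`) make `◇◇p ∧ ¬◇p` true and `◇◇¬q ∨ q` false, respectively.
-/

def Kripke.Serial (M : Kripke) : Prop :=
  ∀ x : M.W, ∃ y, M.R x y

namespace ML

theorem sat_iff_sat_of_sig_eq_empty {M N : Kripke} (hM : M.Serial) (hN : N.Serial) {χ : ML}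
    (hχ : χ.sig = ∅) (x : M.W) (y : N.W) : sat M x χ ↔ sat N y χ := by
  induction χ generalizing x y with
  | top => exact Iff.rfl
  | var r => exact absurd hχ (Set.singleton_ne_empty r)
  | and α β ihα ihβ =>
    obtain ⟨hα, hβ⟩ := Set.union_empty_iff.mp hχ
    exact and_congr (ihα hα x y) (ihβ hβ x y)
  | not α ih => exact not_congr (ih hχ x y)
  | dia α ih =>
    obtain ⟨x', hxx'⟩ := hM x
    obtain ⟨y', hyy'⟩ := hN y
    constructor
    · rintro ⟨v, -, hv⟩
      exact ⟨y', hyy', (ih hχ v y').mp hv⟩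
    · rintro ⟨v, -, hv⟩
      exact ⟨x', hxx', (ih hχ x' v).mpr hv⟩

theorem exists_cycle_of_sat_diaDia_not_dia {M : Kripke} (hM : M.WeaklyTransitive) {w : M.W}
    {α : ML} (h : sat M w ((dia (dia α)).and (not (dia α)))) :
    ∃ v, M.R w v ∧ M.R v w := by
  obtain ⟨⟨v, hwv, u, hvu, hu⟩, hnot⟩ := h
  obtain rfl : w = u := (hM w v u hwv hvu).resolve_right fun hwu => hnot ⟨u, hwu, hu⟩
  exact ⟨v, hwv, hvu⟩

theorem wK4Entails_diaDia_not_dia (α β : ML) :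
    WK4Entails ((dia (dia α)).and (not (dia α))) (or (dia (dia (not β))) β) := by
  intro M hM w h
  obtain ⟨v, hwv, hvw⟩ := exists_cycle_of_sat_diaDia_not_dia hM h
  rintro ⟨hnot, hnβ⟩
  exact hnot ⟨v, hwv, w, hvw, hnβ⟩

end ML

def twoCycle : Kripke :=
  ⟨Bool, ⟨true⟩, (· ≠ ·), fun _ => {true}⟩

def natLT : Kripke :=
  ⟨ℕ, ⟨0⟩, (· < ·), fun _ => {n | n ≠ 0}⟩

theorem twoCycle_weaklyTransitive : twoCycle.WeaklyTransitive := by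
  intro x y z hxy hyz
  left
  cases x <;> cases y <;> cases z <;> simp_all [twoCycle]

theorem twoCycle_serial : twoCycle.Serial :=
  fun x => ⟨!x, by cases x <;> simp [twoCycle]⟩

theorem natLT_weaklyTransitive : natLT.WeaklyTransitive :=
  fun _ _ _ hxy hyz => Or.inr (lt_trans hxy hyz)

theorem natLT_serial : natLT.Serial :=
  fun (n : ℕ) => ⟨n + 1, Nat.lt_add_one n⟩

theorem twoCycle_sat_diaDia_not_dia (p : ℕ) :
    ML.sat twoCycle true ((ML.dia (ML.dia (ML.var p))).and (ML.not (ML.dia (ML.var p)))) := by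
  refine ⟨⟨false, Bool.false_ne_true.symm, true, Bool.false_ne_true, rfl⟩, ?_⟩
  rintro ⟨(_ | _), hv, hvp⟩
  · exact Bool.false_ne_true hvp
  · exact hv rfl

theorem natLT_not_sat_or_diaDia_not (q : ℕ) :
    ¬ ML.sat natLT (0 : ℕ) (ML.or (ML.dia (ML.dia (ML.not (ML.var q)))) (ML.var q)) := by
  simp [ML.or, ML.sat, natLT]

theorem wK4_no_interpolant_general (p q : ℕ)
    (φ ψ : ML)
    (hφ : φ = ML.and (ML.dia (ML.dia (ML.var p))) (ML.not (ML.dia (ML.var p))))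
    (hψ : ψ = ML.or (ML.dia (ML.dia (ML.not (ML.var q)))) (ML.var q)) :
    WK4Entails φ ψ ∧
      ¬ ∃ χ : ML, χ.sig = ∅ ∧ WK4Entails φ χ ∧ WK4Entails χ ψ := by
  subst hφ hψ
  refine ⟨ML.wK4Entails_diaDia_not_dia _ _, ?_⟩
  rintro ⟨χ, hχ, hφχ, hχψ⟩
  have hχ_true : ML.sat twoCycle true χ :=
    hφχ _ twoCycle_weaklyTransitive true (twoCycle_sat_diaDia_not_dia p)
  have hχ_zero : ML.sat natLT (0 : ℕ) χ :=
    (ML.sat_iff_sat_of_sig_eq_empty twoCycle_serial natLT_serial hχ true (0 : ℕ)).mp hχ_true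
  exact natLT_not_sat_or_diaDia_not q (hχψ _ natLT_weaklyTransitive (0 : ℕ) hχ_zero)

theorem wK4_no_interpolant (p q : ℕ) (hpq : p ≠ q)
    (φ ψ : ML)
    (hφ : φ = ML.and (ML.dia (ML.dia (ML.var p))) (ML.not (ML.dia (ML.var p))))
    (hψ : ψ = ML.or (ML.dia (ML.dia (ML.not (ML.var q)))) (ML.var q)) :
    WK4Entails φ ψ ∧
      ¬ ∃ χ : ML, χ.sig = ∅ ∧ WK4Entails φ χ ∧ WK4Entails χ ψ :=
  wK4_no_interpolant_general p q φ ψ hφ hψ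
end

section
/- Let i and j be distinct nominals, φ = i ∧ ◇i, and ψ = j → ◇j. Then φ ⊨ ψ in K^nom (φ entails ψ at every world of every ML^nom-model), but there is no ML^nom-formula χ with sig(χ) ⊆ sig(φ) ∩ sig(ψ) = ∅ such that φ ⊨ χ and χ ⊨ ψ. Consequently, the basic modal logic with nominals K^nom does not have the Craig interpolation property. -/
/-- Formulas of modal logic with nominals, ML^nom: propositional variables and
nominals (both indexed by `ℕ`) combined with `⊤`, `∧`, `¬` and `◇`. -/
inductive MLn : Type
  | top : MLn
  | var : ℕ → MLn
  | nom : ℕ → MLn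
  | and : MLn → MLn → MLn
  | not : MLn → MLn
  | dia : MLn → MLn

/-- `φ → ψ` as an abbreviation. -/
def MLn.impl (φ ψ : MLn) : MLn := .not (.and φ (.not ψ))

/-- The propositional variables occurring in a formula. -/
def MLn.sigP : MLn → Set ℕ
  | .top => ∅
  | .var p => {p}
  | .nom _ => ∅
  | .and φ ψ => φ.sigP ∪ ψ.sigP
  | .not φ => φ.sigP
  | .dia φ => φ.sigP

/-- The nominals occurring in a formula. -/
def MLn.sigN : MLn → Set ℕ
  | .top => ∅
  | .var _ => ∅
  | .nom i => {i}
  | .and φ ψ => φ.sigN ∪ ψ.sigN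
  | .not φ => φ.sigN
  | .dia φ => φ.sigN

/-- An ML^nom-model: a Kripke model in which, additionally, every nominal denotes
a single world (so that its valuation is a singleton subset). -/
structure KripkeN : Type 1 where
  W : Type
  nonempty : Nonempty W
  R : W → W → Prop
  V : ℕ → Set W
  N : ℕ → W

/-- Truth of an ML^nom-formula at a world. -/
def MLn.sat (M : KripkeN) : M.W → MLn → Prop
  | _, .top => True
  | w, .var p => w ∈ M.V p
  | w, .nom i => M.N i = w
  | w, .and φ ψ => MLn.sat M w φ ∧ MLn.sat M w ψ
  | w, .not φ => ¬ MLn.sat M w φ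
  | w, .dia φ => ∃ v, M.R w v ∧ MLn.sat M v φ

/-- Entailment in K^nom: at every world of every ML^nom-model. -/
def KnomEntails (φ ψ : MLn) : Prop :=
  ∀ M : KripkeN, ∀ w : M.W, MLn.sat M w φ → MLn.sat M w ψ

/-- Single reflexive point. -/
def M1 : KripkeN := ⟨Unit, ⟨()⟩, fun _ _ => True, fun _ => ∅, fun _ => ()⟩

/-- Two points, each seeing only the other. -/
def M2 : KripkeN := ⟨Bool, ⟨false⟩, fun x y => x ≠ y, fun _ => ∅, fun _ => false⟩

lemma sigfree_transfer (χ : MLn) (hP : χ.sigP ⊆ ∅) (hN : χ.sigN ⊆ ∅) :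
    ∀ b : Bool, MLn.sat M2 b χ ↔ MLn.sat M1 () χ := by
  induction χ with
  | top => intro b; simp [MLn.sat]
  | var p => exact absurd (hP (by simp [MLn.sigP])) (Set.notMem_empty p)
  | nom k => exact absurd (hN (by simp [MLn.sigN])) (Set.notMem_empty k)
  | and φ ψ ihφ ihψ =>
      intro b
      simp only [MLn.sigP, MLn.sigN, Set.union_subset_iff] at hP hN
      simp [MLn.sat, ihφ hP.1 hN.1 b, ihψ hP.2 hN.2 b]
  | not φ ih =>
      intro b
      simp [MLn.sat, ih hP hN b]
  | dia φ ih =>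
      intro b
      constructor
      · rintro ⟨v, _, hv⟩
        exact ⟨(), trivial, (ih hP hN v).1 hv⟩
      · rintro ⟨v, _, hv⟩
        exact ⟨!b, by simp [M2], (ih hP hN (!b)).2 hv⟩

theorem Knom_no_interpolant (i j : ℕ) (hij : i ≠ j) (φ ψ : MLn)
    (hφ : φ = MLn.and (MLn.nom i) (MLn.dia (MLn.nom i)))
    (hψ : ψ = MLn.impl (MLn.nom j) (MLn.dia (MLn.nom j))) :
    KnomEntails φ ψ ∧
      ¬ ∃ χ : MLn, χ.sigP ⊆ φ.sigP ∩ ψ.sigP ∧ χ.sigN ⊆ φ.sigN ∩ ψ.sigN ∧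
        KnomEntails φ χ ∧ KnomEntails χ ψ := by
  subst hφ hψ
  constructor
  · rintro M w ⟨hi, v, hR, hv⟩
    rintro ⟨hj, hnd⟩
    have hvw : v = w := hv.symm.trans hi
    exact hnd ⟨w, hvw ▸ hR, hj⟩
  · rintro ⟨χ, hP, hN, h1, h2⟩
    simp only [MLn.sigP, MLn.sigN, MLn.impl] at hP hN
    have hP' : χ.sigP ⊆ ∅ := by intro x hx; have := (hP hx).1; simpa using this
    have hN' : χ.sigN ⊆ ∅ := by
      intro x hx
      have := hN hx
      simp at this
      exact absurd (this.1.symm.trans this.2) hij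
    have hχ1 : MLn.sat M1 () χ := h1 M1 () ⟨rfl, (), trivial, rfl⟩
    have hχ2 : MLn.sat M2 false χ := (sigfree_transfer χ hP' hN' false).2 hχ1
    have := h2 M2 false hχ2
    apply this
    refine ⟨rfl, ?_⟩
    rintro ⟨v, hR, hv⟩
    simp [M2] at hR hv
    simp [hR, MLn.sat, M2] at hv
end

section
/- (Good model method.) Let Λ' be a set of FO-formulas in one free variable x, let φ(x) be an FO-formula, let φ^s ∈ Λ', and let G be a class of pointed structures such that: (transfer) for every structure A and element a there exists a pointed structure B,b in G with A,a ≡_{Λ'} B,b; and (indistinguishability) for every pointed structure B,b in G, B ⊨ φ(b) iff B ⊨ φ^s(b). Then φ is logically equivalent to some formula of Λ' if and only if φ is logically equivalent to φ^s. -/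
open FirstOrder

/-- A pointed structure: a (nonempty) structure for the language `L`
together with a distinguished element of its domain. -/
structure PtStruct (L : FirstOrder.Language) where
  Dom : Type
  [str : L.Structure Dom]
  [dom_nonempty : Nonempty Dom]
  pt : Dom

attribute [instance] PtStruct.str PtStruct.dom_nonempty

/-- The good model method: if `G` is a class of pointed structures satisfying
(transfer) and (indistinguishability) for `φ` and the simplifying formula `φˢ ∈ Λ'`,
then `φ` is logically equivalent to some formula of `Λ'` iff `φ` is logically
equivalent to `φˢ`. -/
theorem good_model_method
    {L : FirstOrder.Language}
    (Λ' : Set (L.Formula (Fin 1)))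
    (φ φs : L.Formula (Fin 1)) (hφs : φs ∈ Λ')
    (G : Set (PtStruct L))
    (transfer : ∀ (A : Type) [L.Structure A] [Nonempty A] (a : A),
      ∃ B ∈ G, ∀ χ ∈ Λ', (Language.Formula.Realize χ (fun _ => a) ↔
        Language.Formula.Realize χ (fun _ => B.pt)))
    (indist : ∀ B ∈ G, (Language.Formula.Realize φ (fun _ => PtStruct.pt B) ↔
        Language.Formula.Realize φs (fun _ => PtStruct.pt B))) :
    (∃ χ ∈ Λ', ∀ (A : Type) [L.Structure A] [Nonempty A] (a : A),
        φ.Realize (fun _ => a) ↔ χ.Realize (fun _ => a)) ↔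
      (∀ (A : Type) [L.Structure A] [Nonempty A] (a : A),
        φ.Realize (fun _ => a) ↔ φs.Realize (fun _ => a)) := by
  constructor
  · rintro ⟨χ, hχ, hequiv⟩ A _ _ a
    obtain ⟨B, hBG, htr⟩ := transfer A a
    have h1 := hequiv A a
    have h2 := hequiv B.Dom B.pt
    have h3 := htr χ hχ
    have h4 := htr φs hφs
    have h5 := indist B hBG
    tauto
  · intro h
    exact ⟨φs, hφs, h⟩
end

section
/- For every Kripke model M = (W,R,V) and every world w: (a) for every ML-formula χ, M,w ⊨ χ iff M^ω,(w,0) ⊨ χ; and (b) for every GML-formula φ and every i < ω, M^ω,(w,i) ⊨ φ iff M^ω,(w,i) ⊨ φ^f, where φ^f is the flattening of φ. Hence the class of pointed models of the form M^ω,(w,0) is good for GML/ML-definability. -/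
/-- Formulas of graded modal logic GML: modal logic with graded modalities
`◇^{≥k}` for `k ≥ 1`. The constructor `gdia k φ` represents `◇^{≥ k+1} φ`. -/
inductive GML : Type
  | top : GML
  | var : ℕ → GML
  | and : GML → GML → GML
  | not : GML → GML
  | dia : GML → GML
  | gdia : ℕ → GML → GML

/-- A GML-formula is an ML-formula if it contains no graded modality. -/
def GML.IsML : GML → Prop
  | .top => True
  | .var _ => True
  | .and φ ψ => φ.IsML ∧ ψ.IsML
  | .not φ => φ.IsML
  | .dia φ => φ.IsML
  | .gdia _ _ => False

/-- The flattening of a GML-formula: replace every `◇^{≥k}` by `◇`. -/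
def GML.flatten : GML → GML
  | .top => .top
  | .var p => .var p
  | .and φ ψ => .and φ.flatten ψ.flatten
  | .not φ => .not φ.flatten
  | .dia φ => .dia φ.flatten
  | .gdia _ φ => .dia φ.flatten

/-- Truth of a GML-formula at a world: `gdia k φ` (that is, `◇^{≥ k+1} φ`) holds at `u`
iff there are at least `k+1` distinct successors of `u` satisfying `φ`. -/
def GML.sat (M : Kripke) : M.W → GML → Prop
  | _, .top => True
  | w, .var p => w ∈ M.V p
  | w, .and φ ψ => GML.sat M w φ ∧ GML.sat M w ψ
  | w, .not φ => ¬ GML.sat M w φ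
  | w, .dia φ => ∃ v, M.R w v ∧ GML.sat M v φ
  | w, .gdia k φ => ∃ f : Fin (k + 1) ↪ M.W, ∀ i, M.R w (f i) ∧ GML.sat M (f i) φ

/-- The model `M^ω`, obtained by replacing every world of `M` by countably many copies. -/
def Kripke.omega (M : Kripke) : Kripke where
  W := M.W × ℕ
  nonempty := ⟨(@Classical.arbitrary M.W M.nonempty, 0)⟩
  R := fun u v => M.R u.1 v.1
  V := fun p => {u | u.1 ∈ M.V p}

lemma copy_invariant (M : Kripke) : ∀ (φ : GML) (u : M.W) (i j : ℕ),
    GML.sat M.omega (u, i) φ → GML.sat M.omega (u, j) φ := by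
  intro φ
  induction φ with
  | top => intro _ _ _ _; trivial
  | var p => intro u i j h; exact h
  | and φ ψ ihφ ihψ => intro u i j h; exact ⟨ihφ u i j h.1, ihψ u i j h.2⟩
  | not φ ih => intro u i j h hc; exact h (ih u j i hc)
  | dia φ ih => intro u i j h; obtain ⟨v, hR, hs⟩ := h; exact ⟨v, hR, hs⟩
  | gdia k φ ih => intro u i j h; obtain ⟨f, hf⟩ := h; exact ⟨f, hf⟩

lemma flatten_iff (M : Kripke) : ∀ (φ : GML) (u : M.omega.W),
    GML.sat M.omega u φ ↔ GML.sat M.omega u φ.flatten := by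
  intro φ
  induction φ with
  | top => intro u; rfl
  | var p => intro u; rfl
  | and φ ψ ihφ ihψ => intro u; exact and_congr (ihφ u) (ihψ u)
  | not φ ih => intro u; exact not_congr (ih u)
  | dia φ ih =>
    intro u
    constructor
    · rintro ⟨v, hR, hs⟩; exact ⟨v, hR, (ih v).1 hs⟩
    · rintro ⟨v, hR, hs⟩; exact ⟨v, hR, (ih v).2 hs⟩
  | gdia k φ ih =>
    intro u
    constructor
    · rintro ⟨f, hf⟩
      exact ⟨f 0, (hf 0).1, (ih (f 0)).1 (hf 0).2⟩
    · rintro ⟨v, hR, hs⟩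
      refine ⟨⟨fun m => (v.1, m.val), ?_⟩, ?_⟩
      · intro a b hab
        exact Fin.ext (congrArg Prod.snd hab)
      · intro m
        refine ⟨hR, ?_⟩
        exact copy_invariant M φ v.1 v.2 m.val ((ih v).2 hs)

lemma ml_transfer (M : Kripke) : ∀ (χ : GML), χ.IsML → ∀ (w : M.W) (i : ℕ),
    GML.sat M w χ ↔ GML.sat M.omega (w, i) χ := by
  intro χ
  induction χ with
  | top => intro _ _ _; rfl
  | var p => intro _ _ _; rfl
  | and φ ψ ihφ ihψ => intro h w i; exact and_congr (ihφ h.1 w i) (ihψ h.2 w i)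
  | not φ ih => intro h w i; exact not_congr (ih h w i)
  | dia φ ih =>
    intro h w i
    constructor
    · rintro ⟨v, hR, hs⟩; exact ⟨(v, 0), hR, (ih h v 0).1 hs⟩
    · rintro ⟨⟨v, j⟩, hR, hs⟩; exact ⟨v, hR, (ih h v j).2 hs⟩
  | gdia k φ ih => intro h; exact absurd h id

/-- The class of pointed models `M^ω,(w,0)` is good for GML/ML-definability: ML-formulas
transfer from `M,w` to `M^ω,(w,0)`, and on `M^ω` every GML-formula is
indistinguishable from its flattening. -/
theorem good_models_for_GML_ML (M : Kripke) (w : M.W) :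
    (∀ χ : GML, χ.IsML → (GML.sat M w χ ↔ GML.sat M.omega (w, 0) χ)) ∧
      (∀ (φ : GML) (i : ℕ), GML.sat M.omega (w, i) φ ↔ GML.sat M.omega (w, i) φ.flatten) := by
  exact ⟨fun χ h => ml_transfer M χ h w 0, fun φ i => flatten_iff M φ (w, i)⟩
end

section
/- A GML-formula φ is ML-definable (i.e., there is an ML-formula χ such that for every Kripke model M and world w, M,w ⊨ φ iff M,w ⊨ χ) if and only if the equivalence φ ↔ φ^f is true at every world of every Kripke model, where φ^f is the flattening of φ. -/
/-!
Replace every world of a model `M` by countably many copies, inheriting the relation and the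
valuation. In the inflated model every successor satisfying a formula has infinitely many copies
satisfying it, so `◇^{≥k}` collapses to `◇`, and a copy of `w` satisfies `φ` exactly when `w`
satisfies `φ^f` in `M`. An ML-formula `χ` equals its own flattening, so it cannot tell `w` from its
copy; hence if `φ ≡ χ`, then `φ` at `w` ↔ `χ` at `w` ↔ `χ` at the copy ↔ `φ` at the copy ↔ `φ^f`
at `w`.
-/

lemma GML.isML_flatten (φ : GML) : φ.flatten.IsML := by
  induction φ <;> simp [GML.flatten, GML.IsML, *]

lemma GML.IsML.flatten_eq {φ : GML} (hφ : φ.IsML) : φ.flatten = φ := by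
  induction φ with
  | top | var => rfl
  | and φ ψ ihφ ihψ => simp [GML.flatten, ihφ hφ.1, ihψ hφ.2]
  | not φ ih => simp [GML.flatten, ih hφ]
  | dia φ ih => simp [GML.flatten, ih hφ]
  | gdia => exact hφ.elim

def Kripke.prodNat (M : Kripke) : Kripke where
  W := M.W × ℕ
  nonempty := M.nonempty.map (·, 0)
  R u v := M.R u.1 v.1
  V p := Prod.fst ⁻¹' M.V p

lemma Kripke.sat_prodNat_iff_sat_flatten (M : Kripke) (φ : GML) (u : M.W) (n : ℕ) :
    GML.sat M.prodNat (u, n) φ ↔ GML.sat M u φ.flatten := by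
  induction φ generalizing u n with
  | top | var => rfl
  | and φ ψ ihφ ihψ => exact and_congr (ihφ u n) (ihψ u n)
  | not φ ih => exact not_congr (ih u n)
  | dia φ ih =>
    constructor
    · rintro ⟨v, huv, hv⟩
      exact ⟨v.1, huv, (ih v.1 v.2).mp hv⟩
    · rintro ⟨v, huv, hv⟩
      exact ⟨(v, 0), huv, (ih v 0).mpr hv⟩
  | gdia k φ ih =>
    constructor
    · rintro ⟨f, hf⟩
      exact ⟨(f 0).1, (hf 0).1, (ih (f 0).1 (f 0).2).mp (hf 0).2⟩
    · rintro ⟨v, huv, hv⟩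
      exact ⟨⟨fun i => (v, i.val), fun i j hij => Fin.ext (congrArg Prod.snd hij)⟩,
        fun i => ⟨huv, (ih v i).mpr hv⟩⟩

/-- A GML-formula is ML-definable iff it is equivalent to its flattening. -/
theorem GML_ML_definability (φ : GML) :
    (∃ χ : GML, χ.IsML ∧ ∀ (M : Kripke) (w : M.W), GML.sat M w φ ↔ GML.sat M w χ) ↔
      (∀ (M : Kripke) (w : M.W), GML.sat M w φ ↔ GML.sat M w φ.flatten) := by
  constructor
  · rintro ⟨χ, hχ, hφχ⟩ M w
    calc GML.sat M w φ ↔ GML.sat M w χ := hφχ M w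
      _ ↔ GML.sat M w χ.flatten := by rw [hχ.flatten_eq]
      _ ↔ GML.sat M.prodNat (w, 0) χ := (M.sat_prodNat_iff_sat_flatten χ w 0).symm
      _ ↔ GML.sat M.prodNat (w, 0) φ := (hφχ M.prodNat (w, 0)).symm
      _ ↔ GML.sat M w φ.flatten := M.sat_prodNat_iff_sat_flatten φ w 0
  · intro h
    exact ⟨φ.flatten, φ.isML_flatten, h⟩
end

section
/- (Barwise–Moschovakis theorem.) Let φ(P,x) be an FO-formula over a relational signature extended with an extra unary predicate P, in which every occurrence of P is positive. Then μP.φ is FO-definable (there is an FO-formula ψ(x) over the base signature such that for every structure A and every element a, a belongs to the least fixed point of f_φ^A iff A ⊨ ψ(a)) if and only if φ(P,x) is bounded over the class of all structures. -/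
/-!
If `φ` is bounded by `n`, then `μP.φ` is the `n`-th stage, which is defined by the formula
obtained by substituting `φ` into itself `n` times, starting from `⊥`.

Conversely, suppose `ψ` defines `μP.φ` but `φ` is unbounded. Choose structures `Mₙ` and elements
`aₙ` that enter the fixed point exactly at stage `n + 1`, and let `a` be the class of `(aₙ)` in an
ultraproduct over a nonprincipal ultrafilter on `ℕ`. By Łoś, `ψ(a)` holds, so `a` is in the least
fixed point; by Łoś again, `a` lies in no finite stage. This is impossible because in the
ultraproduct the union of the finite stages is already a fixed point: for a positive formula,
truth with `P` read as the union of a definable chain is witnessed at a finite stage. The only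
nontrivial case is a universal quantifier, where countable saturation of the ultraproduct turns
counterexamples at each stage into a single counterexample for all stages.
-/

open FirstOrder

/-- Relation symbols of the language consisting of a single unary predicate `P`. -/
def UnRel : ℕ → Type
  | 1 => Unit
  | _ => Empty

/-- The language consisting of a single unary predicate `P`. -/
def unaryLang : FirstOrder.Language := ⟨fun _ => Empty, UnRel⟩

/-- The structure on `A` interpreting the unary predicate `P` as the set `X`. -/
def unaryStructure {A : Type} (X : Set A) : unaryLang.Structure A where
  funMap := fun f _ => Empty.elim f
  RelMap := fun {n} r =>
    match n, r with
    | 1, _ => fun v => v 0 ∈ X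

/-- The expansion of an `L`-structure on `A` to the language `L.sum unaryLang`,
interpreting the extra unary predicate `P` as `X`. -/
def extStructure (L : FirstOrder.Language) {A : Type} [L.Structure A] (X : Set A) :
    (L.sum unaryLang).Structure A :=
  letI : unaryLang.Structure A := unaryStructure X
  inferInstance

/-- `Positive true φ` says that every occurrence of the extra predicate `P` in `φ` is
positive (under an even number of negations); `Positive false φ` that every occurrence
is negative. -/
def Positive {L : FirstOrder.Language} {α : Type} :
    Bool → ∀ {n : ℕ}, (L.sum unaryLang).BoundedFormula α n → Prop
  | _, _, .falsum => True
  | _, _, .equal _ _ => True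
  | true, _, .rel _ _ => True
  | false, _, .rel r _ => (match r with | Sum.inl _ => True | Sum.inr _ => False)
  | b, _, .imp f g => Positive (!b) f ∧ Positive b g
  | b, _, .all f => Positive b f

/-- The monotone operator `f_φ^A` induced by `φ(P,x)` on a structure `A`:
`f_φ^A(X) = {a ∈ A : A ⊨ φ(X,a)}`. -/
def fOp (L : FirstOrder.Language) {A : Type} [L.Structure A]
    (φ : (L.sum unaryLang).Formula (Fin 1)) (X : Set A) : Set A :=
  letI := extStructure L X
  {a | φ.Realize (fun _ => a)}

/-- The least fixed point of a monotone set operator, as the intersection of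
all prefixed points. -/
def lfpSet {A : Type} (f : Set A → Set A) : Set A := ⋂₀ {X | f X ⊆ X}

/-- `φ(P,x)` is bounded over the class of all structures: the least fixed point is
reached in at most `n` iterations from `∅`, uniformly over all structures. -/
def Bounded (L : FirstOrder.Language) (φ : (L.sum unaryLang).Formula (Fin 1)) : Prop :=
  ∃ n : ℕ, ∀ (A : Type) [L.Structure A] [Nonempty A],
    (fOp L φ (A := A))^[n] ∅ = (fOp L φ (A := A))^[n + 1] ∅

open FirstOrder.Language Filter

section LeastFixedPoint

variable {A : Type} {f : Set A → Set A}

theorem iterate_empty_subset_lfpSet (hf : Monotone f) (k : ℕ) : f^[k] ∅ ⊆ lfpSet f := by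
  induction k with
  | zero => exact Set.empty_subset _
  | succ k ih =>
    rw [Function.iterate_succ_apply']
    exact Set.subset_sInter fun X hX => (hf (ih.trans (Set.sInter_subset_of_mem hX))).trans hX

theorem lfpSet_eq_iterate_of_eq (hf : Monotone f) {n : ℕ} (h : f^[n] ∅ = f^[n + 1] ∅) :
    lfpSet f = f^[n] ∅ := by
  refine (Set.sInter_subset_of_mem ?_).antisymm (iterate_empty_subset_lfpSet hf n)
  rw [Set.mem_ofPred_eq, ← Function.iterate_succ_apply' f n, ← h]

theorem lfpSet_eq_iUnion_iterate (hf : Monotone f) (h : f (⋃ k, f^[k] ∅) ⊆ ⋃ k, f^[k] ∅) :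
    lfpSet f = ⋃ k, f^[k] ∅ :=
  (Set.sInter_subset_of_mem h).antisymm (Set.iUnion_subset (iterate_empty_subset_lfpSet hf))

end LeastFixedPoint

namespace BarwiseMoschovakis

variable {L : Language}

theorem arity_eq_one_of_unaryLang {l : ℕ} (r : unaryLang.Relations l) : l = 1 :=
  match l, r with
  | 1, _ => rfl

/-- `unaryLang` has no function symbols, so every term of `L.sum unaryLang` is an `L`-term. -/
def baseTerm {β : Type*} : (L.sum unaryLang).Term β → L.Term β
  | .var v => .var v
  | .func (Sum.inl f) ts => .func f fun i => baseTerm (ts i)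
  | .func (Sum.inr f) _ => nomatch f

theorem realize_baseTerm {A : Type} [L.Structure A] (X : Set A) {β : Type*} (v : β → A)
    (t : (L.sum unaryLang).Term β) :
    @Term.realize _ A (extStructure L X) β v t = (baseTerm t).realize v := by
  induction t with
  | var => rfl
  | func f ts ih =>
    rcases f with f | f
    · exact congrArg (Structure.funMap f) (funext ih)
    · nomatch f

section RealizeWith

variable {A : Type} [L.Structure A] {α : Type} {n : ℕ}

def RealizeWith (X : Set A) (χ : (L.sum unaryLang).BoundedFormula α n) (v : α → A)
    (xs : Fin n → A) : Prop :=
  @BoundedFormula.Realize _ A (extStructure L X) α n χ v xs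

variable (X : Set A) (v : α → A) (xs : Fin n → A)

@[simp]
theorem realizeWith_equal (t₁ t₂ : (L.sum unaryLang).Term (α ⊕ Fin n)) :
    RealizeWith X (.equal t₁ t₂) v xs ↔
      (baseTerm t₁).realize (Sum.elim v xs) = (baseTerm t₂).realize (Sum.elim v xs) := by
  rw [← realize_baseTerm X, ← realize_baseTerm X]
  rfl

@[simp]
theorem realizeWith_rel_inl {l : ℕ} (r : L.Relations l)
    (ts : Fin l → (L.sum unaryLang).Term (α ⊕ Fin n)) :
    RealizeWith X (.rel (Sum.inl r) ts) v xs ↔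
      Structure.RelMap r fun i => (baseTerm (ts i)).realize (Sum.elim v xs) := by
  simp only [← realize_baseTerm X]
  rfl

@[simp]
theorem realizeWith_rel_inr (r : unaryLang.Relations 1)
    (ts : Fin 1 → (L.sum unaryLang).Term (α ⊕ Fin n)) :
    RealizeWith X (.rel (Sum.inr r) ts) v xs ↔ (baseTerm (ts 0)).realize (Sum.elim v xs) ∈ X := by
  rw [← realize_baseTerm X]
  rfl

@[simp]
theorem realizeWith_imp (χ₁ χ₂ : (L.sum unaryLang).BoundedFormula α n) :
    RealizeWith X (χ₁.imp χ₂) v xs ↔ (RealizeWith X χ₁ v xs → RealizeWith X χ₂ v xs) :=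
  Iff.rfl

@[simp]
theorem realizeWith_all (χ : (L.sum unaryLang).BoundedFormula α (n + 1)) :
    RealizeWith X χ.all v xs ↔ ∀ a, RealizeWith X χ v (Fin.snoc xs a) :=
  Iff.rfl

end RealizeWith

theorem realizeWith_mono {A : Type} [L.Structure A] {X Y : Set A} (hXY : X ⊆ Y) {α : Type}
    {n : ℕ} {χ : (L.sum unaryLang).BoundedFormula α n} {b : Bool} (hχ : Positive b χ)
    {v : α → A} {xs : Fin n → A} :
    RealizeWith (bif b then X else Y) χ v xs → RealizeWith (bif b then Y else X) χ v xs := by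
  induction χ generalizing b with
  | falsum => exact id
  | equal => simp only [realizeWith_equal]; exact id
  | rel R ts =>
    rcases R with R | R
    · simp only [realizeWith_rel_inl]; exact id
    · obtain rfl := arity_eq_one_of_unaryLang R
      cases b
      · exact hχ.elim
      · simp only [realizeWith_rel_inr, cond_true]
        exact @hXY _
  | imp χ₁ χ₂ ih₁ ih₂ =>
    simp only [realizeWith_imp]
    intro h h₁
    cases b <;> exact ih₂ hχ.2 (h (ih₁ hχ.1 h₁))
  | all χ ih =>
    simp only [realizeWith_all]
    exact fun h a => ih hχ (h a)

def realizeSet (ψ : L.Formula (Fin 1)) (A : Type) [L.Structure A] : Set A :=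
  {a | ψ.Realize fun _ => a}

def substP {α : Type} (ψ : L.Formula (Fin 1)) :
    ∀ {n}, (L.sum unaryLang).BoundedFormula α n → L.BoundedFormula α n
  | _, .falsum => .falsum
  | _, .equal t₁ t₂ => .equal (baseTerm t₁) (baseTerm t₂)
  | _, .rel (Sum.inl r) ts => .rel r fun i => baseTerm (ts i)
  -- `relabel id` turns the free variables `Fin n` of `ψ(t)` back into bound ones
  | _, .rel (l := 1) (Sum.inr _) ts => (ψ.subst fun _ => baseTerm (ts 0)).relabel id
  | _, .imp χ₁ χ₂ => (substP ψ χ₁).imp (substP ψ χ₂)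
  | _, .all χ => (substP ψ χ).all

theorem realize_substP {A : Type} [L.Structure A] (ψ : L.Formula (Fin 1)) {α : Type} {n : ℕ}
    (χ : (L.sum unaryLang).BoundedFormula α n) (v : α → A) (xs : Fin n → A) :
    (substP ψ χ).Realize v xs ↔ RealizeWith (realizeSet ψ A) χ v xs := by
  induction χ with
  | falsum => exact Iff.rfl
  | equal t₁ t₂ => rw [realizeWith_equal]; exact Iff.rfl
  | rel R ts =>
    rcases R with R | R
    · rw [realizeWith_rel_inl]; exact Iff.rfl
    · obtain rfl := arity_eq_one_of_unaryLang R
      rw [realizeWith_rel_inr]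
      simp only [substP, BoundedFormula.realize_relabel, BoundedFormula.realize_subst]
      exact iff_of_eq (congrArg _ (Subsingleton.elim _ _))
  | imp χ₁ χ₂ ih₁ ih₂ => rw [realizeWith_imp, ← ih₁, ← ih₂]; exact BoundedFormula.realize_imp
  | all χ ih => rw [realizeWith_all]; exact forall_congr' fun a => ih _

def stageFormula (φ : (L.sum unaryLang).Formula (Fin 1)) : ℕ → L.Formula (Fin 1)
  | 0 => ⊥
  | k + 1 => substP (stageFormula φ k) φ

section Stages

variable {A : Type} [L.Structure A] (φ : (L.sum unaryLang).Formula (Fin 1))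

theorem mem_fOp_iff {X : Set A} {a : A} : a ∈ fOp L φ X ↔ RealizeWith X φ (fun _ => a) default :=
  Iff.rfl

theorem realizeSet_stageFormula (k : ℕ) :
    realizeSet (stageFormula φ k) A = (fOp L φ)^[k] ∅ := by
  induction k with
  | zero => exact Set.eq_empty_of_forall_notMem fun _ => id
  | succ k ih =>
    rw [Function.iterate_succ_apply', ← ih]
    exact Set.ext fun a => realize_substP _ φ _ default

variable {φ}

theorem fOp_mono (hφ : Positive true φ) : Monotone (fOp L φ (A := A)) :=
  fun _ _ hXY _ => realizeWith_mono hXY (b := true) hφ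

theorem monotone_stages (hφ : Positive true φ) : Monotone fun k => (fOp L φ (A := A))^[k] ∅ :=
  (fOp_mono hφ).monotone_iterate_of_le_map (Set.empty_subset _)

end Stages

section Ultraproduct

abbrev NatUltraproduct (M : ℕ → Type) : Type := (hyperfilter ℕ : Filter ℕ).Product M

variable {M : ℕ → Type} [∀ i, L.Structure (M i)] [∀ i, Nonempty (M i)]

theorem realize_snoc_coe {α : Type} {n : ℕ} (θ : L.BoundedFormula α (n + 1))
    (v : α → ∀ i, M i) (xs : Fin n → ∀ i, M i) (y : ∀ i, M i) :
    θ.Realize (fun a => (v a : NatUltraproduct M))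
        (Fin.snoc (fun j => (xs j : NatUltraproduct M)) (y : NatUltraproduct M)) ↔
      ∀ᶠ i in hyperfilter ℕ, θ.Realize (fun a => v a i) (Fin.snoc (fun j => xs j i) (y i)) := by
  have hsnoc : ∀ i, (fun j => (Fin.snoc xs y : Fin (n + 1) → ∀ i, M i) j i) =
      Fin.snoc (fun j => xs j i) (y i) := fun i =>
    funext fun j => Fin.lastCases (by simp only [Fin.snoc_last])
      (fun _ => by simp only [Fin.snoc_castSucc]) j
  have hcoe : Fin.snoc (fun j => (xs j : NatUltraproduct M)) (y : NatUltraproduct M) =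
      fun j => ((Fin.snoc xs y : Fin (n + 1) → ∀ i, M i) j : NatUltraproduct M) :=
    (Fin.comp_snoc _ xs y).symm
  rw [hcoe]
  simp only [Ultraproduct.boundedFormula_realize_cast, hsnoc]

/-- Countable saturation of ultraproducts over `ℕ`, for a decreasing chain of formulas. -/
theorem exists_forall_realize_of_antitone {α : Type} {n : ℕ}
    (θ : ℕ → L.BoundedFormula α (n + 1))
    (hθ : ∀ i (v : α → M i) (xs : Fin (n + 1) → M i), Antitone fun k => (θ k).Realize v xs)
    (v : α → NatUltraproduct M) (xs : Fin n → NatUltraproduct M)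
    (h : ∀ k, ∃ y, (θ k).Realize v (Fin.snoc xs y)) :
    ∃ y, ∀ k, (θ k).Realize v (Fin.snoc xs y) := by
  classical
  have hcoe : Function.Surjective ((↑) : (∀ i, M i) → NatUltraproduct M) :=
    @Quotient.mk'_surjective _ ((hyperfilter ℕ : Filter ℕ).productSetoid M)
  obtain ⟨v, rfl⟩ := hcoe.comp_left v
  obtain ⟨xs, rfl⟩ := hcoe.comp_left xs
  choose y hy using h
  obtain ⟨y, rfl⟩ := hcoe.comp_left y
  have hy' := fun k => (realize_snoc_coe (θ k) v xs (y k)).1 (hy k)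
  -- at coordinate `i`, use the witness of the largest `k ≤ i` whose witness works there
  let good (i k : ℕ) : Prop := (θ k).Realize (fun a => v a i) (Fin.snoc (fun j => xs j i) (y k i))
  refine ⟨(fun i => y (Nat.findGreatest (good i) i) i : ∀ i, M i), fun k => ?_⟩
  refine (realize_snoc_coe (θ k) v xs _).2 ?_
  filter_upwards [hy' k, (eventually_ge_atTop k).filter_mono Nat.hyperfilter_le_atTop]
    with i hi hki
  exact hθ i _ _ (Nat.le_findGreatest hki hi) (Nat.findGreatest_spec (P := good i) hki hi)

theorem realizeWith_iUnion (θ : ℕ → L.Formula (Fin 1))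
    (hθ : ∀ (A : Type) [L.Structure A], Monotone fun k => realizeSet (θ k) A)
    {α : Type} {n : ℕ} (χ : (L.sum unaryLang).BoundedFormula α n) {b : Bool} (hχ : Positive b χ)
    (v : α → NatUltraproduct M) (xs : Fin n → NatUltraproduct M) :
    (b = true → RealizeWith (⋃ k, realizeSet (θ k) _) χ v xs →
        ∃ k, RealizeWith (realizeSet (θ k) _) χ v xs) ∧
      (b = false → (∀ k, RealizeWith (realizeSet (θ k) _) χ v xs) →
        RealizeWith (⋃ k, realizeSet (θ k) _) χ v xs) := by
  -- both polarities at once, since `imp` swaps them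
  induction χ generalizing b with
  | falsum => exact ⟨fun _ h => h.elim, fun _ h => (h 0).elim⟩
  | equal =>
    simp only [realizeWith_equal]
    exact ⟨fun _ h => ⟨0, h⟩, fun _ h => h 0⟩
  | rel R ts =>
    rcases R with R | R
    · simp only [realizeWith_rel_inl]
      exact ⟨fun _ h => ⟨0, h⟩, fun _ h => h 0⟩
    · obtain rfl := arity_eq_one_of_unaryLang R
      cases b
      · exact hχ.elim
      · simp only [realizeWith_rel_inr, Set.mem_iUnion]
        exact ⟨fun _ h => h, nofun⟩
  | imp χ₁ χ₂ ih₁ ih₂ =>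
    simp only [realizeWith_imp]
    cases b
    · refine ⟨nofun, fun _ h h₁ => ?_⟩
      obtain ⟨k₁, hk₁⟩ := (ih₁ hχ.1 xs).1 rfl h₁
      refine (ih₂ hχ.2 xs).2 rfl fun k => ?_
      have hk₁' := realizeWith_mono (hθ _ (le_max_right k k₁)) (b := true) hχ.1 hk₁
      exact realizeWith_mono (hθ _ (le_max_left k k₁)) (b := false) hχ.2 (h _ hk₁')
    · refine ⟨fun _ h => ?_, nofun⟩
      by_cases h₁ : ∀ k, RealizeWith (realizeSet (θ k) _) χ₁ v xs
      · obtain ⟨k, hk⟩ := (ih₂ hχ.2 xs).1 rfl (h ((ih₁ hχ.1 xs).2 rfl h₁))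
        exact ⟨k, fun _ => hk⟩
      · obtain ⟨k, hk⟩ := not_forall.1 h₁
        exact ⟨k, fun h' => absurd h' hk⟩
  | all χ ih =>
    simp only [realizeWith_all]
    cases b
    · exact ⟨nofun, fun _ h a => (ih hχ _).2 rfl fun k => h k a⟩
    · refine ⟨fun _ h => ?_, nofun⟩
      by_contra! hne
      have hanti : ∀ i (v : α → M i) (xs : Fin _ → M i),
          Antitone fun k => (∼(substP (θ k) χ)).Realize v xs := by
        intro i v xs k k' hkk' hk' hk
        rw [realize_substP] at hk
        exact hk' ((realize_substP _ _ _ _).2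
          (realizeWith_mono (hθ (M i) hkk') (χ := χ) (b := true) hχ hk))
      obtain ⟨a, ha⟩ := exists_forall_realize_of_antitone (fun k => ∼(substP (θ k) χ)) hanti v xs
        fun k => (hne k).imp fun _ => mt (realize_substP _ _ _ _).1
      obtain ⟨k, hk⟩ := (ih hχ _).1 rfl (h a)
      exact ha k ((realize_substP _ _ _ _).2 hk)

theorem lfpSet_fOp_eq_iUnion_stages {φ : (L.sum unaryLang).Formula (Fin 1)}
    (hφ : Positive true φ) :
    lfpSet (fOp L φ (A := NatUltraproduct M)) = ⋃ k, (fOp L φ)^[k] ∅ := by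
  refine lfpSet_eq_iUnion_iterate (fOp_mono hφ) fun a ha => ?_
  have hstages (A : Type) [L.Structure A] : Monotone fun k => realizeSet (stageFormula φ k) A := by
    simpa only [realizeSet_stageFormula] using monotone_stages hφ
  simp only [← realizeSet_stageFormula φ, mem_fOp_iff] at ha
  obtain ⟨k, hk⟩ := (realizeWith_iUnion _ hstages φ hφ _ _).1 rfl ha
  rw [realizeSet_stageFormula] at hk
  exact Set.mem_iUnion.2 ⟨k + 1, by rwa [Function.iterate_succ_apply', mem_fOp_iff]⟩

end Ultraproduct

theorem definable_lfpSet_of_bounded {φ : (L.sum unaryLang).Formula (Fin 1)}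
    (hφ : Positive true φ) (hb : Bounded L φ) :
    ∃ ψ : L.Formula (Fin 1), ∀ (A : Type) [L.Structure A] [Nonempty A] (a : A),
      a ∈ lfpSet (fOp L φ) ↔ ψ.Realize fun _ => a := by
  obtain ⟨n, hn⟩ := hb
  refine ⟨stageFormula φ n, fun A _ _ a => ?_⟩
  rw [lfpSet_eq_iterate_of_eq (fOp_mono hφ) (hn A), ← realizeSet_stageFormula]
  rfl

theorem bounded_of_definable_lfpSet {φ : (L.sum unaryLang).Formula (Fin 1)}
    (hφ : Positive true φ) (ψ : L.Formula (Fin 1))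
    (hψ : ∀ (A : Type) [L.Structure A] [Nonempty A] (a : A),
      a ∈ lfpSet (fOp L φ) ↔ ψ.Realize fun _ => a) :
    Bounded L φ := by
  by_contra hunb
  have hgap : ∀ n, ∃ (M : Type) (_ : L.Structure M) (_ : Nonempty M) (a : M),
      a ∈ (fOp L φ)^[n + 1] ∅ ∧ a ∉ (fOp L φ)^[n] ∅ := by
    intro n
    by_contra! h
    exact hunb ⟨n, fun M _ hM => (monotone_stages hφ n.le_succ).antisymm fun a => h M _ hM a⟩
  choose M _ _ a ha using hgap
  have hlfp : (a : NatUltraproduct M) ∈ lfpSet (fOp L φ (A := NatUltraproduct M)) := by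
    refine (hψ (NatUltraproduct M) _).2
      ((Ultraproduct.realize_formula_cast ψ fun _ => a).2 (.of_forall fun i => ?_))
    exact (hψ (M i) (a i)).1 (iterate_empty_subset_lfpSet (fOp_mono hφ) _ (ha i).1)
  rw [lfpSet_fOp_eq_iUnion_stages hφ] at hlfp
  obtain ⟨k, hk⟩ := Set.mem_iUnion.1 hlfp
  rw [← realizeSet_stageFormula] at hk
  obtain ⟨i, hi, hki⟩ := ((Ultraproduct.realize_formula_cast _ fun _ => a).1 hk).and
    ((eventually_ge_atTop k).filter_mono Nat.hyperfilter_le_atTop) |>.exists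
  have hi' : a i ∈ (fOp L φ)^[k] ∅ := by
    rw [← realizeSet_stageFormula]
    exact hi
  exact (ha i).2 (monotone_stages hφ hki hi')

end BarwiseMoschovakis

open BarwiseMoschovakis in
theorem barwise_moschovakis_general (L : FirstOrder.Language)
    (φ : (L.sum unaryLang).Formula (Fin 1)) (hpos : Positive true φ) :
    (∃ ψ : L.Formula (Fin 1), ∀ (A : Type) [L.Structure A] [Nonempty A] (a : A),
        a ∈ lfpSet (fOp L φ) ↔ ψ.Realize (fun _ => a)) ↔
      Bounded L φ :=
  ⟨fun ⟨ψ, hψ⟩ => bounded_of_definable_lfpSet hpos ψ hψ, definable_lfpSet_of_bounded hpos⟩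

/-- The Barwise–Moschovakis theorem: `μP.φ` is FO-definable iff `φ(P,x)` is bounded. -/
theorem barwise_moschovakis (L : FirstOrder.Language) [L.IsRelational]
    (φ : (L.sum unaryLang).Formula (Fin 1)) (hpos : Positive true φ) :
    (∃ ψ : L.Formula (Fin 1), ∀ (A : Type) [L.Structure A] [Nonempty A] (a : A),
        a ∈ lfpSet (fOp L φ) ↔ ψ.Realize (fun _ => a)) ↔
      Bounded L φ :=
  barwise_moschovakis_general L φ hpos
end

section
/- A language L ⊆ A⁺ over a finite alphabet A is regular if and only if it is recognised by a finite semigroup, i.e., there exist a finite semigroup S, a semigroup homomorphism α : A⁺ → S from the free semigroup on A, and a subset F ⊆ S such that L = α⁻¹(F). -/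
/-!
A finite automaton `M` with state set `σ` gives the homomorphism `w ↦ (s ↦ M.evalFrom s w)` into
the finite transition monoid of `σ`, and `w` is accepted iff the image of `w` sends the start state
into an accepting state. Conversely, a homomorphism `h : A⁺ → S` extends to a monoid homomorphism
`A* → S¹ = WithOne S`, and the automaton with states `S¹` that reads a letter `a` by
right multiplication with `h [a]` computes it.
-/

/-- A bundled finite semigroup. -/
structure FinSemigroup where
  carrier : Type
  [str : Semigroup carrier]
  [fin : Finite carrier]

attribute [instance] FinSemigroup.str FinSemigroup.fin

/-- `h : A⁺ → S` is a semigroup homomorphism from the free semigroup `A⁺` of nonempty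
words (under concatenation): it is multiplicative on nonempty words. (Its value on the
empty list is irrelevant.) -/
def IsWordHom {A S : Type} [Semigroup S] (h : List A → S) : Prop :=
  ∀ u v : List A, u ≠ [] → v ≠ [] → h (u ++ v) = h u * h v

/-- The language `L ⊆ A⁺` is recognised by the semigroup homomorphism `h : A⁺ → S`
via the accepting set `F ⊆ S`: `L = h⁻¹(F)`. -/
def RecognisedBy {A S : Type} [Semigroup S] (h : List A → S) (F : Set S)
    (L : Set (List A)) : Prop :=
  IsWordHom h ∧ L = {w : List A | w ≠ [] ∧ h w ∈ F}

instance Function.End.instFinite {σ : Type*} [Finite σ] : Finite (Function.End σ) :=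
  inferInstanceAs (Finite (σ → σ))

instance MulOpposite.instFinite {α : Type*} [Finite α] : Finite αᵐᵒᵖ :=
  Finite.of_equiv α MulOpposite.opEquiv

instance WithOne.instFinite {S : Type*} [Finite S] : Finite (WithOne S) :=
  inferInstanceAs (Finite (Option S))

namespace DFA

variable {A σ : Type}

-- The opposite monoid, since in `u ++ v` the letters of `u` act first.
def transition (M : DFA A σ) (w : List A) : (Function.End σ)ᵐᵒᵖ :=
  MulOpposite.op fun s => M.evalFrom s w

theorem transition_append (M : DFA A σ) (u v : List A) :
    M.transition (u ++ v) = M.transition u * M.transition v :=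
  MulOpposite.unop_injective <| funext fun s => M.evalFrom_of_append s u v

theorem isWordHom_transition (M : DFA A σ) : IsWordHom M.transition :=
  fun u v _ _ => M.transition_append u v

theorem recognisedBy_transition (M : DFA A σ) {L : Set (List A)} (hM : M.accepts = L)
    (hL : [] ∉ L) : RecognisedBy M.transition {f | f.unop M.start ∈ M.accept} L := by
  refine ⟨M.isWordHom_transition, Set.ext fun w => ?_⟩
  change w ∈ L ↔ w ≠ [] ∧ w ∈ M.accepts
  rw [hM]
  exact ⟨fun hw => ⟨ne_of_mem_of_not_mem hw hL, hw⟩, And.right⟩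

def rightMul {M : Type*} [Monoid M] (g : A → M) (F : Set M) : DFA A M :=
  ⟨fun m a => m * g a, 1, F⟩

theorem rightMul_evalFrom {M : Type*} [Monoid M] (g : A → M) (F : Set M) (m : M) (w : List A) :
    (rightMul g F).evalFrom m w = m * (w.map g).prod := by
  induction w generalizing m with
  | nil => simp
  | cons a w ih =>
    rw [evalFrom_cons, ih, List.map_cons, List.prod_cons, ← mul_assoc]
    rfl

theorem mem_rightMul_accepts {M : Type*} [Monoid M] {g : A → M} {F : Set M} {w : List A} :
    w ∈ (rightMul g F).accepts ↔ (w.map g).prod ∈ F := by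
  rw [mem_accepts, eval, rightMul_evalFrom]
  exact iff_of_eq (congrArg (· ∈ F) (one_mul _))

end DFA

theorem IsWordHom.coe_eq_prod_map {A S : Type} [Semigroup S] {h : List A → S} (hh : IsWordHom h)
    {w : List A} (hw : w ≠ []) :
    (h w : WithOne S) = (w.map fun a => (h [a] : WithOne S)).prod := by
  induction w with
  | nil => exact absurd rfl hw
  | cons a t ih =>
    rcases eq_or_ne t [] with rfl | ht
    · simp
    · rw [List.map_cons, List.prod_cons, ← ih ht, ← WithOne.coe_mul, ← hh [a] t (by simp) ht]
      rfl

theorem isRegular_of_recognisedBy {A S : Type} [Semigroup S] [Finite S] {h : List A → S}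
    {F : Set S} {L : Set (List A)} (hL : RecognisedBy h F L) :
    Language.IsRegular (L : Language A) := by
  obtain ⟨hh, rfl⟩ := hL
  have : Fintype (WithOne S) := Fintype.ofFinite _
  refine ⟨WithOne S, inferInstance, DFA.rightMul (fun a => (h [a] : WithOne S)) ((↑) '' F), ?_⟩
  ext w
  change w ∈ (DFA.rightMul _ _).accepts ↔ w ≠ [] ∧ h w ∈ F
  rw [DFA.mem_rightMul_accepts]
  rcases eq_or_ne w [] with rfl | hw
  · simp
  · simp [← hh.coe_eq_prod_map hw, hw]

theorem regular_iff_recognised_by_finite_semigroup_general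
    {A : Type} (L : Set (List A)) (hL : [] ∉ L) :
    Language.IsRegular (L : Language A) ↔
      ∃ (S : FinSemigroup) (h : List A → S.carrier) (F : Set S.carrier),
        RecognisedBy h F L := by
  constructor
  · rintro ⟨σ, _, M, hM⟩
    exact ⟨⟨(Function.End σ)ᵐᵒᵖ⟩, _, _, M.recognisedBy_transition hM hL⟩
  · rintro ⟨S, h, F, hLF⟩
    exact isRegular_of_recognisedBy hLF

/-- A language of nonempty words is regular iff it is recognised by a finite semigroup. -/
theorem regular_iff_recognised_by_finite_semigroup
    {A : Type} [Fintype A] (L : Set (List A)) (hL : [] ∉ L) :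
    Language.IsRegular (L : Language A) ↔
      ∃ (S : FinSemigroup) (h : List A → S.carrier) (F : Set S.carrier),
        RecognisedBy h F L :=
  regular_iff_recognised_by_finite_semigroup_general L hL
end

section
/- Let φ = p ∧ □⁺((p ∧ ○⊤) ↔ ○¬p) ∧ ◇(¬p ∧ ¬○⊤) and ψ = (q ∧ □⁺((q ∧ ○⊤) ↔ ○¬q)) → ◇(¬q ∧ ¬○⊤), where p and q are distinct propositional variables. Then φ ⊨_LTL ψ, but there is no LTL-formula χ containing no propositional variables such that φ ⊨_LTL χ and χ ⊨_LTL ψ. Consequently, LTL over finite timelines does not have the Craig interpolation property. -/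
open FirstOrder

/-- LTL-formulas over propositional variables indexed by `ℕ`, with the temporal
operators ○ (next), ◇ (strict eventually) and U (strict until). -/
inductive LTL : Type
  | top : LTL
  | var : ℕ → LTL
  | and : LTL → LTL → LTL
  | not : LTL → LTL
  | next : LTL → LTL
  | ev : LTL → LTL
  | untl : LTL → LTL → LTL

/-- A finite temporal model `({0,…,ℓ}, <, V)`, given by `ℓ = len` and the valuation `V`. -/
structure TModel : Type where
  len : ℕ
  V : ℕ → ℕ → Prop

/-- Truth of an LTL-formula at a time point `n ≤ len` of a finite temporal model. -/
def LTL.sat (M : TModel) : ℕ → LTL → Prop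
  | _, .top => True
  | n, .var p => M.V p n
  | n, .and φ ψ => LTL.sat M n φ ∧ LTL.sat M n ψ
  | n, .not φ => ¬ LTL.sat M n φ
  | n, .next φ => n < M.len ∧ LTL.sat M (n + 1) φ
  | n, .ev φ => ∃ m, n < m ∧ m ≤ M.len ∧ LTL.sat M m φ
  | n, .untl φ ψ => ∃ m, n < m ∧ m ≤ M.len ∧ LTL.sat M m φ ∧
      ∀ k, n < k → k < m → LTL.sat M k ψ

/-- `□χ` abbreviates `¬◇¬χ`. -/
def LTL.box (φ : LTL) : LTL := .not (.ev (.not φ))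

/-- `□⁺χ` abbreviates `χ ∧ □χ`. -/
def LTL.boxPlus (φ : LTL) : LTL := .and φ φ.box

/-- `φ → ψ` as an abbreviation. -/
def LTL.impl (φ ψ : LTL) : LTL := .not (.and φ (.not ψ))

/-- `φ ↔ ψ` as an abbreviation. -/
def LTL.iff (φ ψ : LTL) : LTL := .and (φ.impl ψ) (ψ.impl φ)

/-- The propositional variables occurring in an LTL-formula. -/
def LTL.vars : LTL → Set ℕ
  | .top => ∅
  | .var p => {p}
  | .and φ ψ => φ.vars ∪ ψ.vars
  | .not φ => φ.vars
  | .next φ => φ.vars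
  | .ev φ => φ.vars
  | .untl φ ψ => φ.vars ∪ ψ.vars

/-- Entailment in LTL over finite timelines. -/
def LTLEntails (φ ψ : LTL) : Prop :=
  ∀ M : TModel, LTL.sat M 0 φ → LTL.sat M 0 ψ

/-! ### Auxiliary machinery -/

/-- Truth of a variable-free formula as a function of the remaining distance
`M.len - n`. -/
def LTL.nsat : LTL → ℕ → Prop
  | .top, _ => True
  | .var _, _ => True
  | .and φ ψ, d => φ.nsat d ∧ ψ.nsat d
  | .not φ, d => ¬ φ.nsat d
  | .next φ, d => 0 < d ∧ φ.nsat (d - 1)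
  | .ev φ, d => ∃ e, e < d ∧ φ.nsat e
  | .untl φ ψ, d => ∃ e, e < d ∧ φ.nsat e ∧ ∀ e', e < e' → e' < d → ψ.nsat e'

theorem LTL.sat_iff_nsat (χ : LTL) (hv : χ.vars = ∅) :
    ∀ (M : TModel) (n : ℕ), n ≤ M.len → (χ.sat M n ↔ χ.nsat (M.len - n)) := by
  induction χ with
  | top => intro M n _; simp [LTL.sat, LTL.nsat]
  | var r => exact absurd hv (by simp [LTL.vars])
  | and φ ψ ihφ ihψ =>
    rw [LTL.vars, Set.union_empty_iff] at hv
    intro M n hn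
    exact and_congr (ihφ hv.1 M n hn) (ihψ hv.2 M n hn)
  | not φ ih =>
    intro M n hn
    exact not_congr (ih hv M n hn)
  | next φ ih =>
    intro M n hn
    constructor
    · rintro ⟨h1, h2⟩
      refine ⟨by omega, ?_⟩
      have h3 := (ih hv M (n + 1) (by omega)).mp h2
      have he : M.len - (n + 1) = M.len - n - 1 := by omega
      rwa [he] at h3
    · rintro ⟨h1, h2⟩
      refine ⟨by omega, ?_⟩
      have he : M.len - n - 1 = M.len - (n + 1) := by omega
      rw [he] at h2
      exact (ih hv M (n + 1) (by omega)).mpr h2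
  | ev φ ih =>
    intro M n hn
    constructor
    · rintro ⟨m, h1, h2, h3⟩
      exact ⟨M.len - m, by omega, (ih hv M m h2).mp h3⟩
    · rintro ⟨e, h1, h2⟩
      refine ⟨M.len - e, by omega, by omega, ?_⟩
      have he : M.len - (M.len - e) = e := by omega
      exact (ih hv M (M.len - e) (by omega)).mpr (by rwa [he])
  | untl φ ψ ihφ ihψ =>
    rw [LTL.vars, Set.union_empty_iff] at hv
    intro M n hn
    constructor
    · rintro ⟨m, h1, h2, h3, h4⟩
      refine ⟨M.len - m, by omega, (ihφ hv.1 M m h2).mp h3, ?_⟩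
      intro e' he1 he2
      have hk : M.len - (M.len - e') = e' := by omega
      have h5 := (ihψ hv.2 M (M.len - e') (by omega)).mp
        (h4 (M.len - e') (by omega) (by omega))
      rwa [hk] at h5
    · rintro ⟨e, h1, h2, h3⟩
      refine ⟨M.len - e, by omega, by omega, ?_, ?_⟩
      · have he : M.len - (M.len - e) = e := by omega
        exact (ihφ hv.1 M (M.len - e) (by omega)).mpr (by rwa [he])
      · intro k hk1 hk2
        refine (ihψ hv.2 M k (by omega)).mpr ?_
        exact h3 (M.len - k) (by omega) (by omega)

/-- The set of distances at which a formula (in particular a variable-free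
formula) holds is eventually constant. -/
theorem LTL.nsat_evconst (χ : LTL) :
    ∃ N : ℕ, (∀ d, N ≤ d → χ.nsat d) ∨ (∀ d, N ≤ d → ¬ χ.nsat d) := by
  induction χ with
  | top => exact ⟨0, Or.inl fun d _ => trivial⟩
  | var r => exact ⟨0, Or.inl fun d _ => trivial⟩
  | and φ ψ ihφ ihψ =>
    obtain ⟨N1, h1⟩ := ihφ
    obtain ⟨N2, h2⟩ := ihψ
    rcases h1 with h1 | h1
    · rcases h2 with h2 | h2
      · exact ⟨max N1 N2, Or.inl fun d hd => ⟨h1 d (by omega), h2 d (by omega)⟩⟩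
      · exact ⟨N2, Or.inr fun d hd h => h2 d hd h.2⟩
    · exact ⟨N1, Or.inr fun d hd h => h1 d hd h.1⟩
  | not φ ih =>
    obtain ⟨N, h⟩ := ih
    rcases h with h | h
    · exact ⟨N, Or.inr fun d hd hn => hn (h d hd)⟩
    · exact ⟨N, Or.inl fun d hd => h d hd⟩
  | next φ ih =>
    obtain ⟨N, h⟩ := ih
    rcases h with h | h
    · exact ⟨N + 1, Or.inl fun d hd => ⟨by omega, h (d - 1) (by omega)⟩⟩
    · exact ⟨N + 1, Or.inr fun d hd hn => h (d - 1) (by omega) hn.2⟩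
  | ev φ ih =>
    obtain ⟨N, h⟩ := ih
    rcases h with h | h
    · exact ⟨N + 1, Or.inl fun d hd => ⟨d - 1, by omega, h (d - 1) (by omega)⟩⟩
    · by_cases hex : ∃ e, e < N ∧ φ.nsat e
      · obtain ⟨e, he, hse⟩ := hex
        exact ⟨e + 1, Or.inl fun d hd => ⟨e, by omega, hse⟩⟩
      · refine ⟨0, Or.inr fun d _ hn => ?_⟩
        obtain ⟨e, he, hse⟩ := hn
        by_cases heN : e < N
        · exact hex ⟨e, heN, hse⟩
        · exact h e (by omega) hse
  | untl φ ψ ihφ ihψ =>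
    obtain ⟨N1, h1⟩ := ihφ
    obtain ⟨N2, h2⟩ := ihψ
    rcases h1 with h1 | h1
    · refine ⟨N1 + 1, Or.inl fun d hd => ⟨d - 1, by omega, h1 (d - 1) (by omega), ?_⟩⟩
      intro e' he1 he2
      exact absurd he2 (by omega)
    · rcases h2 with h2 | h2
      · by_cases hQ : ∃ e, e < N1 ∧ φ.nsat e ∧ ∀ e', e < e' → e' < N2 → ψ.nsat e'
        · obtain ⟨e, heN, hφe, hall⟩ := hQ
          refine ⟨max N1 N2 + 1, Or.inl fun d hd => ⟨e, by omega, hφe, ?_⟩⟩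
          intro e' he1 he2
          by_cases he'N : e' < N2
          · exact hall e' he1 he'N
          · exact h2 e' (by omega)
        · refine ⟨max N1 N2 + 1, Or.inr fun d hd hn => ?_⟩
          obtain ⟨e, hed, hφe, hall⟩ := hn
          have heN1 : e < N1 := by
            by_contra hc
            exact h1 e (by omega) hφe
          exact hQ ⟨e, heN1, hφe, fun e' ha hb => hall e' ha (by omega)⟩
      · refine ⟨max N1 N2 + 2, Or.inr fun d hd hn => ?_⟩
        obtain ⟨e, hed, hφe, hall⟩ := hn
        by_cases hc : e = d - 1
        · subst hc; exact h1 (d - 1) (by omega) hφe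
        · exact h2 (d - 1) (by omega) (hall (d - 1) (by omega) (by omega))

/-- If `r` holds at `0` and satisfies the alternation condition everywhere,
then `r` holds exactly at even time points. -/
theorem LTL.alt_lemma (M : TModel) (r : ℕ)
    (h : LTL.sat M 0 (LTL.and (.var r)
      (LTL.boxPlus (LTL.iff (LTL.and (.var r) (.next .top)) (.next (.not (.var r))))))) :
    ∀ n, n ≤ M.len → (M.V r n ↔ Even n) := by
  simp only [LTL.boxPlus, LTL.box, LTL.iff, LTL.impl, LTL.sat] at h
  obtain ⟨h0, hX0, hXall⟩ := h
  push_neg at hXall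
  have key : ∀ n, n < M.len → (M.V r n ↔ ¬ M.V r (n + 1)) := by
    intro n hlt
    rcases Nat.eq_zero_or_pos n with h' | h'
    · subst h'; tauto
    · have hXn := hXall n h' (le_of_lt hlt)
      tauto
  intro n
  induction n with
  | zero => intro _; simpa using h0
  | succ k ih =>
    intro hk
    have hk' : k < M.len := by omega
    have hx1 := key k hk'
    have hx2 := ih (by omega)
    rw [Nat.even_add_one]
    tauto

/-- The model of length `ℓ` in which every variable holds exactly at the even
time points. -/
def altModel (ℓ : ℕ) : TModel := ⟨ℓ, fun _ n => Even n⟩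

theorem altModel_sat (r ℓ : ℕ) :
    LTL.sat (altModel ℓ) 0 (LTL.and (.var r)
      (LTL.boxPlus (LTL.iff (LTL.and (.var r) (.next .top)) (.next (.not (.var r)))))) := by
  simp only [altModel, LTL.boxPlus, LTL.box, LTL.iff, LTL.impl, LTL.sat]
  have hX : ∀ n : ℕ, ¬((Even n ∧ n < ℓ ∧ True) ∧ ¬(n < ℓ ∧ ¬ Even (n + 1))) ∧
      ¬((n < ℓ ∧ ¬ Even (n + 1)) ∧ ¬(Even n ∧ n < ℓ ∧ True)) := by
    intro n
    have he := Nat.even_add_one (n := n)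
    tauto
  refine ⟨Even.zero, hX 0, ?_⟩
  rintro ⟨m, hm0, hml, hc⟩
  exact hc (hX m)

/-- LTL over finite timelines lacks the Craig interpolation property: the entailment
`φ ⊨ ψ` below has no variable-free interpolant. -/
theorem LTL_no_interpolant (p q : ℕ) (hpq : p ≠ q) (φ ψ : LTL)
    (hφ : φ = LTL.and (.var p)
      (LTL.and (LTL.boxPlus (LTL.iff (LTL.and (.var p) (.next .top)) (.next (.not (.var p)))))
        (LTL.ev (LTL.and (.not (.var p)) (.not (.next .top))))))
    (hψ : ψ = LTL.impl
      (LTL.and (.var q)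
        (LTL.boxPlus (LTL.iff (LTL.and (.var q) (.next .top)) (.next (.not (.var q))))))
      (LTL.ev (LTL.and (.not (.var q)) (.not (.next .top))))) :
    LTLEntails φ ψ ∧
      ¬ ∃ χ : LTL, χ.vars = ∅ ∧ LTLEntails φ χ ∧ LTLEntails χ ψ := by
  subst hφ hψ
  -- models of odd length with alternating valuation satisfy φ
  have hφsat : ∀ ℓ : ℕ, Odd ℓ →
      LTL.sat (altModel ℓ) 0 (LTL.and (.var p)
        (LTL.and (LTL.boxPlus (LTL.iff (LTL.and (.var p) (.next .top))
          (.next (.not (.var p)))))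
          (LTL.ev (LTL.and (.not (.var p)) (.not (.next .top)))))) := by
    intro ℓ hℓ
    have hbase := altModel_sat p ℓ
    have hodd1 : ¬ Even ℓ := by
      rw [Nat.not_even_iff_odd]; exact hℓ
    have hpos : 0 < ℓ := hℓ.pos
    refine ⟨hbase.1, hbase.2, ?_⟩
    refine ⟨ℓ, hpos, le_refl ℓ, ?_, ?_⟩
    · exact hodd1
    · rintro ⟨hlt, -⟩; exact lt_irrefl ℓ hlt
  constructor
  · -- the entailment φ ⊨ ψ
    intro M hM
    have halt := LTL.alt_lemma M p ⟨hM.1, hM.2.1⟩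
    obtain ⟨m, hm0, hml, hnp, hnl⟩ := hM.2.2
    have hmlen : m = M.len := by
      by_contra hc
      exact hnl ⟨by omega, trivial⟩
    subst hmlen
    have hoddlen : ¬ Even M.len := fun he => hnp ((halt M.len le_rfl).mpr he)
    rintro ⟨hq, hnc⟩
    refine hnc ⟨M.len, by omega, le_rfl, ?_, ?_⟩
    · exact fun hv => hoddlen ((LTL.alt_lemma M q hq M.len le_rfl).mp hv)
    · rintro ⟨hlt, -⟩; exact lt_irrefl _ hlt
  · -- no variable-free interpolant
    rintro ⟨χ, hv, h1, h2⟩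
    obtain ⟨N, hN⟩ := χ.nsat_evconst
    have hodd : ∀ d, Odd d → χ.nsat d := by
      intro d hd
      have hs := h1 (altModel d) (hφsat d hd)
      have hres := (LTL.sat_iff_nsat χ hv (altModel d) 0 (Nat.zero_le _)).mp hs
      simpa [altModel] using hres
    rcases hN with hN | hN
    · -- χ eventually true, hence true at the even distance 2N+2, contradicting χ ⊨ ψ
      have hχ : χ.nsat (2 * N + 2) := hN _ (by omega)
      have hs : LTL.sat (altModel (2 * N + 2)) 0 χ := by
        refine (LTL.sat_iff_nsat χ hv _ 0 (Nat.zero_le _)).mpr ?_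
        simpa [altModel] using hχ
      have hψs := h2 _ hs
      refine hψs ⟨altModel_sat q _, ?_⟩
      rintro ⟨m, hm0, hml, hqv, hnl⟩
      have hml' : m ≤ 2 * N + 2 := hml
      have hqv' : ¬ Even m := hqv
      have hm : m = 2 * N + 2 := by
        by_contra hc
        exact hnl ⟨show m < 2 * N + 2 by omega, trivial⟩
      subst hm
      exact hqv' ⟨N + 1, by ring⟩
    · -- χ eventually false, contradicting that χ holds at all odd distances
      exact hN (2 * N + 1) (by omega) (hodd _ (Nat.odd_iff.mpr (by omega)))
end
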